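/- arXiv:1307.8297 — 7 statements merged into one kernel-verified Lean document; each statement's English description precedes it below -/
import Mathlib

section
/- Kleene's Theorem: for a language L over a finite alphabet Σ, the following are equivalent: (1) L is recognizable (there is a homomorphism h from Σ* to a finite monoid N with h⁻¹(h(L)) = L); (2) L is accepted by a deterministic finite automaton; (3) L is accepted by a non-deterministic finite automaton; (4) L is rational (belongs to the smallest class of subsets of Σ* containing finite sets and closed under union, concatenation, and Kleene star). -/
/-!
A finite monoid recognizing `L` is itself a DFA for `L` (read `n ↦ n * h a`), and conversely the
transition monoid of a DFA is finite and recognizes its language; the subset construction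
turns NFAs into DFAs.

Rational languages are regular by Myhill–Nerode: it suffices to find a finite family of
languages containing `L` and closed under quotients by letters. The Brzozowski rules
`a⁻¹(K L) = (a⁻¹K) L + [ε ∈ K] a⁻¹L` and `a⁻¹(L∗) = (a⁻¹L) L∗` show that the languages
`k L + ⋃ T` (resp. `(⋃ T) L∗`), with `k` a quotient of `K` and `T` a set of quotients of `L`,
form such a family.

Regular languages are rational by McNaughton–Yamada: the words leading from `p` to `q` through
intermediate states in `S` satisfy `P(S ∪ {s})(p,q) = P(S)(p,q) + P(S)(p,s) P(S)(s,s)∗ P(S)(s,q)`,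
and for `S = ∅` they have length at most one.
-/

/-- Rational languages over `α`: the smallest class containing the finite
languages and closed under union, concatenation and Kleene star. -/
inductive IsRationalLang {α : Type} : Language α → Prop
  | finite (L : Language α) : Set.Finite L → IsRationalLang L
  | union {K L : Language α} : IsRationalLang K → IsRationalLang L → IsRationalLang (K + L)
  | concat {K L : Language α} : IsRationalLang K → IsRationalLang L → IsRationalLang (K * L)
  | star {L : Language α} : IsRationalLang L → IsRationalLang (KStar.kstar L)

open Computability

namespace MonoidHom

variable {α N : Type*} [Monoid N] (h : FreeMonoid α →* N)

def toDFA (P : Set N) : DFA α N where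
  step n a := n * h (FreeMonoid.of a)
  start := 1
  accept := P

theorem evalFrom_toDFA (P : Set N) (n : N) (w : List α) :
    (h.toDFA P).evalFrom n w = n * h (FreeMonoid.ofList w) := by
  induction w generalizing n with
  | nil => simp [FreeMonoid.ofList_nil]
  | cons a w ih =>
    rw [DFA.evalFrom_cons, ih, FreeMonoid.ofList_cons, map_mul, ← mul_assoc]
    rfl

theorem accepts_toDFA (P : Set N) :
    (h.toDFA P).accepts = (fun w : List α => h (FreeMonoid.ofList w)) ⁻¹' P := by
  ext w
  rw [DFA.mem_accepts, DFA.eval, evalFrom_toDFA]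
  exact iff_of_eq (congrArg (· ∈ P) (one_mul _))

end MonoidHom

namespace DFA

variable {α σ : Type*} (M : DFA α σ)

def transitionHom : FreeMonoid α →* (Function.End σ)ᵐᵒᵖ where
  toFun w := .op fun s => M.evalFrom s w.toList
  map_one' := rfl
  map_mul' x y := MulOpposite.unop_injective <| funext fun s =>
    M.evalFrom_of_append s x.toList y.toList

end DFA

namespace Language

variable {α : Type*} {K L : Language α}

def IsRecognizable (L : Language α) : Prop :=
  ∃ (N : Type) (_ : Monoid N) (_ : Finite N) (h : FreeMonoid α →* N),
    (fun w : List α => h (FreeMonoid.ofList w)) ⁻¹'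
      ((fun w : List α => h (FreeMonoid.ofList w)) '' L) = L

theorem IsRecognizable.isRegular (hL : L.IsRecognizable) : L.IsRegular := by
  obtain ⟨N, _, _, h, hL⟩ := hL
  exact ⟨N, Fintype.ofFinite N, h.toDFA _, by rw [MonoidHom.accepts_toDFA, hL]⟩

theorem IsRegular.isRecognizable (hL : L.IsRegular) : L.IsRecognizable := by
  obtain ⟨σ, _, M, rfl⟩ := hL
  have : Finite (Function.End σ) := inferInstanceAs (Finite (σ → σ))
  refine ⟨_, inferInstance, .of_injective _ MulOpposite.unop_injective, M.transitionHom,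
    subset_antisymm ?_ (Set.subset_preimage_image _ _)⟩
  rintro w ⟨w', hw', heq⟩
  have : M.eval w' = M.eval w := congrFun (congrArg MulOpposite.unop heq) M.start
  exact (this ▸ hw' : M.eval w ∈ M.accept)

theorem isRegular_iff_exists_nfa :
    L.IsRegular ↔ ∃ (σ : Type) (_ : Fintype σ) (M : NFA α σ), M.accepts = L := by
  constructor
  · rintro ⟨σ, _, M, rfl⟩
    exact ⟨σ, inferInstance, M.toNFA, M.toNFA_correct⟩
  · rintro ⟨σ, _, M, rfl⟩
    exact ⟨Set σ, Fintype.ofFinite _, M.toDFA, M.toDFA_correct⟩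

theorem mem_sSup {T : Set (Language α)} {x : List α} : x ∈ sSup T ↔ ∃ M ∈ T, x ∈ M :=
  Set.mem_sUnion

theorem leftQuotient_add (K L : Language α) (x : List α) :
    (K + L).leftQuotient x = K.leftQuotient x + L.leftQuotient x :=
  rfl

theorem leftQuotient_mul_singleton (K L : Language α) (a : α) :
    (K * L).leftQuotient [a] = K.leftQuotient [a] * L + ⨆ _ : [] ∈ K, L.leftQuotient [a] := by
  ext v
  simp only [mem_leftQuotient, mem_add, mem_mul, mem_iSup, List.singleton_append]
  constructor
  · rintro ⟨_ | ⟨b, x⟩, hx, y, hy, hxy⟩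
    · exact Or.inr ⟨hx, by rw [← hxy]; exact hy⟩
    · obtain ⟨rfl, rfl⟩ := List.cons_eq_cons.1 hxy
      exact Or.inl ⟨x, hx, y, hy, rfl⟩
  · rintro (⟨x, hx, y, hy, rfl⟩ | ⟨hK, hv⟩)
    · exact ⟨a :: x, hx, y, hy, rfl⟩
    · exact ⟨[], hK, a :: v, hv, rfl⟩

theorem leftQuotient_kstar_singleton (L : Language α) (a : α) :
    (L∗).leftQuotient [a] = L.leftQuotient [a] * L∗ := by
  ext v
  simp only [mem_leftQuotient, mem_mul, List.singleton_append]
  constructor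
  · rw [mem_kstar_iff_exists_nonempty]
    rintro ⟨_ | ⟨_ | ⟨b, x⟩, S⟩, hv, hS⟩
    · simp at hv
    · exact absurd rfl (hS [] List.mem_cons_self).2
    · obtain ⟨rfl, rfl⟩ := List.cons_eq_cons.1 hv
      exact ⟨x, (hS _ List.mem_cons_self).1, _, join_mem_kstar fun y hy =>
        (hS y (List.mem_cons_of_mem _ hy)).1, rfl⟩
  · rintro ⟨x, hx, y, hy, rfl⟩
    obtain ⟨S, rfl, hS⟩ := mem_kstar.1 hy
    exact join_mem_kstar (L := (a :: x) :: S) fun z hz => by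
      rcases List.mem_cons.1 hz with rfl | hz
      exacts [hx, hS z hz]

theorem leftQuotient_sSup (T : Set (Language α)) (x : List α) :
    (sSup T).leftQuotient x = sSup ((·.leftQuotient x) '' T) := by
  ext v
  simp [mem_sSup]

theorem leftQuotient_mem_range {M : Language α} (hM : M ∈ Set.range L.leftQuotient)
    (y : List α) : M.leftQuotient y ∈ Set.range L.leftQuotient := by
  obtain ⟨x, rfl⟩ := hM
  exact ⟨x ++ y, leftQuotient_append L x y⟩

theorem image_leftQuotient_union_subset_range {T : Set (Language α)}
    (hT : T ⊆ Set.range L.leftQuotient) (p : Prop) (a : α) :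
    (·.leftQuotient [a]) '' T ∪ ⋃ _ : p, {L.leftQuotient [a]} ⊆ Set.range L.leftQuotient :=
  Set.union_subset (Set.image_subset_iff.2 fun _ hM => leftQuotient_mem_range (hT hM) [a])
    (Set.iUnion_subset fun _ => Set.singleton_subset_iff.2 ⟨[a], rfl⟩)

theorem range_leftQuotient_subset {S : Set (Language α)} (hL : L ∈ S)
    (hS : ∀ M ∈ S, ∀ a, M.leftQuotient [a] ∈ S) : Set.range L.leftQuotient ⊆ S := by
  rintro _ ⟨x, rfl⟩
  induction x using List.reverseRecOn with
  | nil => exact hL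
  | append_singleton x a ih => exact leftQuotient_append L x [a] ▸ hS _ ih a

theorem IsRegular.of_leftQuotient_mem {S : Set (Language α)} (hfin : S.Finite) (hL : L ∈ S)
    (hS : ∀ M ∈ S, ∀ a, M.leftQuotient [a] ∈ S) : L.IsRegular :=
  .of_finite_range_leftQuotient (hfin.subset (range_leftQuotient_subset hL hS))

theorem isRegular_of_finite (hL : (L : Set (List α)).Finite) : L.IsRegular := by
  refine .of_finite_range_leftQuotient ?_
  have hsuffixes : {v : List α | ∃ u, u ++ v ∈ L}.Finite :=
    (hL.biUnion fun x _ => x.tails.finite_toSet).subset fun v ⟨u, huv⟩ =>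
      Set.mem_biUnion huv ((List.mem_tails _ _).2 (List.suffix_append u v))
  exact hsuffixes.finite_subsets.subset <| by
    rintro _ ⟨u, rfl⟩ v hv
    exact ⟨u, hv⟩

theorem IsRegular.mul (hK : K.IsRegular) (hL : L.IsRegular) : (K * L).IsRegular := by
  -- the family `k * L + ⋃ T`, with `k` a quotient of `K` and `T` a set of quotients of `L`
  refine .of_leftQuotient_mem (S := Set.image2 (fun k T => k * L + sSup T)
    (Set.range K.leftQuotient) {T | T ⊆ Set.range L.leftQuotient})
    (hK.finite_range_leftQuotient.image2 _ hL.finite_range_leftQuotient.finite_subsets)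
    ⟨K, ⟨[], rfl⟩, ∅, Set.empty_subset _, by simp⟩ ?_
  rintro _ ⟨_, ⟨x, rfl⟩, T, hT, rfl⟩ a
  refine ⟨_, leftQuotient_mem_range ⟨x, rfl⟩ [a], _,
    image_leftQuotient_union_subset_range hT ([] ∈ K.leftQuotient x) a, ?_⟩
  dsimp only
  rw [leftQuotient_add, leftQuotient_mul_singleton, leftQuotient_sSup]
  simp only [sSup_union, sSup_iUnion, sSup_singleton, add_eq_sup]
  ac_rfl

theorem IsRegular.kstar (hL : L.IsRegular) : (L∗).IsRegular := by
  -- the family `(⋃ T) * L∗`, with `T` a set of quotients of `L`, together with `L∗`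
  refine .of_leftQuotient_mem (S := insert (L∗)
    ((fun T => sSup T * L∗) '' {T | T ⊆ Set.range L.leftQuotient}))
    ((hL.finite_range_leftQuotient.finite_subsets.image _).insert _) (Set.mem_insert _ _) ?_
  rintro _ (rfl | ⟨T, hT, rfl⟩) a
  · refine Or.inr ⟨{L.leftQuotient [a]}, Set.singleton_subset_iff.2 ⟨[a], rfl⟩, ?_⟩
    dsimp only
    rw [leftQuotient_kstar_singleton, sSup_singleton]
  · refine Or.inr ⟨_, image_leftQuotient_union_subset_range hT ([] ∈ sSup T) a, ?_⟩
    dsimp only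
    rw [leftQuotient_mul_singleton, leftQuotient_sSup, leftQuotient_kstar_singleton, sSup_union,
      sSup_iUnion, ← add_eq_sup, add_mul, iSup_mul]
    simp only [sSup_singleton]

end Language

theorem IsRationalLang.isRegular {α : Type} {L : Language α} (hL : IsRationalLang L) :
    L.IsRegular := by
  induction hL with
  | finite L hL => exact Language.isRegular_of_finite hL
  | union _ _ hK hL => exact hK.add hL
  | concat _ _ hK hL => exact hK.mul hL
  | star _ hL => exact hL.kstar

theorem IsRationalLang.biSup {α ι : Type} {s : Set ι} (hs : s.Finite) {f : ι → Language α}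
    (hf : ∀ i ∈ s, IsRationalLang (f i)) : IsRationalLang (⨆ i ∈ s, f i) := by
  induction s, hs using Set.Finite.induction_on with
  | empty => simpa using IsRationalLang.finite ⊥ Set.finite_empty
  | @insert i s _ _ ih =>
    rw [iSup_insert, ← add_eq_sup]
    exact .union (hf i (Set.mem_insert i s))
      (ih fun j hj => hf j (Set.mem_insert_of_mem i hj))

namespace DFA

variable {α σ : Type*} (M : DFA α σ)

def pathLang (S : Set σ) (p q : σ) : Language α :=
  {w | M.evalFrom p w = q ∧ ∀ u v, u ++ v = w → u ≠ [] → v ≠ [] → M.evalFrom p u ∈ S}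

variable {M} {S T : Set σ} {p q s : σ}

theorem nil_mem_pathLang_iff : [] ∈ M.pathLang S p q ↔ p = q :=
  ⟨fun h => h.1, fun h => ⟨h, fun _ _ huv hu _ => absurd (List.append_eq_nil_iff.1 huv).1 hu⟩⟩

theorem append_singleton_mem_pathLang_iff {w : List α} {a : α} :
    w ++ [a] ∈ M.pathLang S p q ↔
      ∃ r, w ∈ M.pathLang S p r ∧ (w = [] ∨ r ∈ S) ∧ M.step r a = q := by
  constructor
  · rintro ⟨hq, hS⟩
    refine ⟨M.evalFrom p w, ⟨rfl, fun u v huv hu hv => hS u (v ++ [a]) ?_ hu (by simp)⟩, ?_,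
      by rwa [evalFrom_append_singleton] at hq⟩
    · rw [← huv, List.append_assoc]
    · rcases eq_or_ne w [] with hw | hw
      exacts [Or.inl hw, Or.inr (hS w [a] rfl hw (by simp))]
  · rintro ⟨r, ⟨rfl, hS⟩, hr, rfl⟩
    refine ⟨evalFrom_append_singleton _ _ _ _, fun u v huv hu hv => ?_⟩
    obtain rfl | ⟨v, b, rfl⟩ := v.eq_nil_or_concat
    · exact absurd rfl hv
    rw [List.concat_eq_append, ← List.append_assoc] at huv
    obtain ⟨rfl, -⟩ := List.append_inj' huv rfl
    rcases eq_or_ne v [] with rfl | hv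
    · simpa [hu] using hr
    · exact hS u v rfl hu hv

theorem pathLang_mono (hST : S ⊆ T) : M.pathLang S p q ≤ M.pathLang T p q :=
  fun _ ⟨hq, hS⟩ => ⟨hq, fun u v huv hu hv => hST (hS u v huv hu hv)⟩

theorem append_mem_pathLang (hs : s ∈ S) {u v : List α} (hu : u ∈ M.pathLang S p s)
    (hv : v ∈ M.pathLang S s q) : u ++ v ∈ M.pathLang S p q := by
  induction v using List.reverseRecOn generalizing q with
  | nil => rwa [List.append_nil, ← nil_mem_pathLang_iff.1 hv]
  | append_singleton v a ih =>
    obtain ⟨r, hvr, hr, rfl⟩ := append_singleton_mem_pathLang_iff.1 hv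
    refine List.append_assoc u v [a] ▸
      append_singleton_mem_pathLang_iff.2 ⟨r, ih hvr, Or.inr ?_, rfl⟩
    rcases hr with rfl | hr
    exacts [nil_mem_pathLang_iff.1 hvr ▸ hs, hr]

theorem pathLang_mul_le (hs : s ∈ S) :
    M.pathLang S p s * M.pathLang S s q ≤ M.pathLang S p q := by
  rintro _ ⟨u, hu, v, hv, rfl⟩
  exact append_mem_pathLang hs hu hv

theorem kstar_pathLang_le (hs : s ∈ S) : (M.pathLang S s s)∗ ≤ M.pathLang S s s :=
  kstar_le_of_mul_le_left (Set.singleton_subset_iff.2 (nil_mem_pathLang_iff.2 rfl))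
    (pathLang_mul_le hs)

theorem pathLang_insert_le :
    M.pathLang (insert s S) p q ≤
      M.pathLang S p q + M.pathLang S p s * (M.pathLang S s s)∗ * M.pathLang S s q := by
  intro w hw
  induction w using List.reverseRecOn generalizing q with
  | nil => exact Or.inl (nil_mem_pathLang_iff.2 (nil_mem_pathLang_iff.1 hw))
  | append_singleton w a ih =>
    obtain ⟨r, hwr, hr, rfl⟩ := append_singleton_mem_pathLang_iff.1 hw
    -- either the last letter extends the last factor, or it leaves `s` and starts a new one
    by_cases hrS : w = [] ∨ r ∈ S
    · rcases ih hwr with hw | ⟨x, hx, c, hc, rfl⟩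
      · exact Or.inl (append_singleton_mem_pathLang_iff.2 ⟨r, hw, hrS, rfl⟩)
      · have hca : c ++ [a] ∈ M.pathLang S s (M.step r a) :=
          append_singleton_mem_pathLang_iff.2
            ⟨r, hc, hrS.imp_left fun h => (List.append_eq_nil_iff.1 h).2, rfl⟩
        exact Or.inr (List.append_assoc x c [a] ▸ Language.append_mem_mul hx hca)
    · obtain rfl : r = s := by
        rw [Set.mem_insert_iff] at hr
        tauto
      have hle : M.pathLang S p r + M.pathLang S p r * (M.pathLang S r r)∗ * M.pathLang S r r ≤
          M.pathLang S p r * (M.pathLang S r r)∗ := by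
        refine add_le (le_mul_of_one_le_right' one_le_kstar) ?_
        rw [mul_assoc]
        exact mul_le_mul_right kstar_mul_le_kstar _
      have hw : w ∈ M.pathLang S p r * (M.pathLang S r r)∗ := hle (ih hwr)
      exact Or.inr (Language.append_mem_mul hw
        (append_singleton_mem_pathLang_iff.2 ⟨r, nil_mem_pathLang_iff.2 rfl, Or.inl rfl, rfl⟩))

theorem pathLang_insert :
    M.pathLang (insert s S) p q =
      M.pathLang S p q + M.pathLang S p s * (M.pathLang S s s)∗ * M.pathLang S s q := by
  have hs : s ∈ insert s S := Set.mem_insert s S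
  have hmono := fun p q => M.pathLang_mono (p := p) (q := q) (Set.subset_insert s S)
  refine le_antisymm pathLang_insert_le (add_le (hmono p q) ?_)
  calc M.pathLang S p s * (M.pathLang S s s)∗ * M.pathLang S s q
      ≤ M.pathLang (insert s S) p s * M.pathLang (insert s S) s s *
          M.pathLang (insert s S) s q := by
        gcongr
        exacts [hmono p s, (kstar_mono (hmono s s)).trans (kstar_pathLang_le hs), hmono s q]
    _ ≤ M.pathLang (insert s S) p q := by
        grw [pathLang_mul_le hs, pathLang_mul_le hs]

theorem length_le_one_of_mem_pathLang_empty {w : List α} (hw : w ∈ M.pathLang ∅ p q) :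
    w.length ≤ 1 := by
  by_contra! hlen
  refine hw.2 (w.take 1) (w.drop 1) (List.take_append_drop 1 w) ?_ ?_
  · simpa using hlen.ne_bot
  · rw [Ne, ← List.length_eq_zero_iff, List.length_drop]
    omega

theorem isRationalLang_pathLang {α σ : Type} [Finite α] {M : DFA α σ} {S : Set σ}
    (hS : S.Finite) (p q : σ) : IsRationalLang (M.pathLang S p q) := by
  induction S, hS using Set.Finite.induction_on generalizing p q with
  | empty =>
    exact .finite _ (List.finite_length_le α 1 |>.subset fun _ =>
      length_le_one_of_mem_pathLang_empty)
  | @insert s S _ _ ih =>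
    rw [pathLang_insert]
    exact .union (ih p q) (.concat (.concat (ih p s) (.star (ih s s))) (ih s q))

theorem accepts_eq_iSup_pathLang :
    M.accepts = ⨆ q ∈ M.accept, M.pathLang Set.univ M.start q := by
  ext w
  simp only [Language.mem_iSup]
  constructor
  · exact fun hw => ⟨_, hw, rfl, fun _ _ _ _ _ => trivial⟩
  · rintro ⟨q, hq, rfl, -⟩
    exact hq

theorem isRationalLang_accepts {α σ : Type} [Finite α] [Finite σ] (M : DFA α σ) :
    IsRationalLang M.accepts := by
  rw [accepts_eq_iSup_pathLang]
  exact .biSup (Set.toFinite _) fun q _ => isRationalLang_pathLang Set.finite_univ _ q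

end DFA

theorem Language.IsRegular.isRationalLang {α : Type} [Finite α] {L : Language α}
    (hL : L.IsRegular) : IsRationalLang L := by
  obtain ⟨σ, _, M, rfl⟩ := hL
  exact M.isRationalLang_accepts

/-- Kleene's theorem: recognizability by a finite monoid, acceptance by a DFA,
acceptance by an NFA, and rationality are all equivalent. -/
theorem kleene_theorem {α : Type} [Fintype α] (L : Language α) :
    List.TFAE
      [ ∃ (N : Type) (_ : Monoid N) (_ : Finite N) (h : FreeMonoid α →* N),
          (fun w : List α => h (FreeMonoid.ofList w)) ⁻¹'
            ((fun w : List α => h (FreeMonoid.ofList w)) '' L) = L,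
        ∃ (σ : Type) (_ : Fintype σ) (M : DFA α σ), M.accepts = L,
        ∃ (σ : Type) (_ : Fintype σ) (M : NFA α σ), M.accepts = L,
        IsRationalLang L ] := by
  tfae_have 1 → 2 := Language.IsRecognizable.isRegular
  tfae_have 2 → 1 := Language.IsRegular.isRecognizable
  tfae_have 2 ↔ 3 := Language.isRegular_iff_exists_nfa
  tfae_have 2 → 4 := Language.IsRegular.isRationalLang
  tfae_have 4 → 2 := IsRationalLang.isRegular
  tfae_finish
end

section
/- McKnight's Theorem: a monoid M is finitely generated if and only if every recognizable subset of M is rational. -/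
open Pointwise
/-- Rational subsets of a monoid `M`: the smallest class containing finite
subsets and closed under union, setwise product and generated submonoid. -/
inductive IsRationalSubset {M : Type} [Monoid M] : Set M → Prop
  | finite (L : Set M) : L.Finite → IsRationalSubset L
  | union {K L : Set M} : IsRationalSubset K → IsRationalSubset L → IsRationalSubset (K ∪ L)
  | mul {K L : Set M} : IsRationalSubset K → IsRationalSubset L → IsRationalSubset (K * L)
  | star {L : Set M} : IsRationalSubset L → IsRationalSubset (Submonoid.closure L : Set M)

/-- A subset of a monoid is recognizable if it is saturated by a homomorphism
to a finite monoid. -/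
def IsRecognizableSubset {M : Type} [Monoid M] (L : Set M) : Prop :=
  ∃ (N : Type) (_ : Monoid N) (_ : Finite N) (h : M →* N), h ⁻¹' (h '' L) = L


/-!
Let `M` be generated by a finite set `A` and let `h : M →* N` with `N` finite. Reading a word
over `A` letter by letter, the state `p ∈ N` moves to `p * h a`; this is a finite automaton,
and `h⁻¹ {n}` is the set of labels of its paths from `1` to `n`. The McNaughton–Yamada
argument shows these label sets are rational: allowing one more intermediate state `r`, a path
splits at its visits to `r`, so `P' p q = P p q ∪ P p r * (P r r)^* * P r q`. A recognizable
set is a finite union of fibres `h⁻¹ {n}`, hence rational.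

Conversely, a rational set lies in a finitely generated submonoid, and `M` itself is recognizable.
-/

section PathLabels

variable {M : Type} {N : Type*} [Monoid M] [Monoid N]

/-- `IsPathLabel h A T p m q`: `m` is the product of a word over `A` leading from state `p` to
state `q` in the automaton `p ⟶ p * h a`, with every intermediate state in `T`. -/
inductive IsPathLabel (h : M →* N) (A : Set M) (T : Set N) : N → M → N → Prop
  | one (p : N) : IsPathLabel h A T p 1 p
  | letter (p : N) {a : M} : a ∈ A → IsPathLabel h A T p a (p * h a)
  | mul {p r q : N} {x y : M} : IsPathLabel h A T p x r → r ∈ T → IsPathLabel h A T r y q →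
      IsPathLabel h A T p (x * y) q

def pathLabels (h : M →* N) (A : Set M) (T : Set N) (p q : N) : Set M :=
  {m | IsPathLabel h A T p m q}

variable {h : M →* N} {A : Set M} {T : Set N} {p q r : N} {m : M}

theorem IsPathLabel.mul_map_eq (hm : IsPathLabel h A T p m q) : p * h m = q := by
  induction hm with
  | one => simp
  | letter => rfl
  | mul _ _ _ ihx ihy => rw [map_mul, ← mul_assoc, ihx, ihy]

theorem IsPathLabel.mono {T' : Set N} (hT : T ⊆ T') (hm : IsPathLabel h A T p m q) :
    IsPathLabel h A T' p m q := by
  induction hm with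
  | one p => exact .one p
  | letter p ha => exact .letter p ha
  | mul _ hr _ ihx ihy => exact .mul ihx (hT hr) ihy

theorem pathLabels_empty_subset : pathLabels h A ∅ p q ⊆ insert 1 A := by
  intro m hm
  induction hm with
  | one => exact Set.mem_insert 1 A
  | letter _ ha => exact Set.mem_insert_of_mem 1 ha
  | mul _ hr => exact absurd hr (Set.notMem_empty _)

theorem IsPathLabel.of_mem_closure (hr : r ∈ T)
    (hm : m ∈ Submonoid.closure (pathLabels h A T r r)) : IsPathLabel h A T r m r := by
  induction hm using Submonoid.closure_induction with
  | mem _ hx => exact hx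
  | one => exact .one r
  | mul _ _ _ _ ihx ihy => exact .mul ihx hr ihy

theorem pathLabels_insert_subset :
    pathLabels h A (insert r T) p q ⊆ pathLabels h A T p q ∪
      pathLabels h A T p r * (Submonoid.closure (pathLabels h A T r r) * pathLabels h A T r q) := by
  set C : Set M := ↑(Submonoid.closure (pathLabels h A T r r))
  intro m hm
  induction hm with
  | one p => exact .inl (.one p)
  | letter p ha => exact .inl (.letter p ha)
  | @mul p s q x y _ hs _ ihx ihy =>
    rcases hs with rfl | hs
    · obtain ⟨a, ha, c, hc, rfl⟩ : ∃ a ∈ pathLabels h A T p s, ∃ c ∈ C, a * c = x := by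
        rcases ihx with hx | ⟨a, ha, _, ⟨c, hc, b, hb, rfl⟩, rfl⟩
        · exact ⟨x, hx, 1, one_mem _, mul_one x⟩
        · exact ⟨a, ha, c * b, mul_mem hc (Submonoid.subset_closure hb), rfl⟩
      obtain ⟨c', hc', b, hb, rfl⟩ : ∃ c ∈ C, ∃ b ∈ pathLabels h A T s q, c * b = y := by
        rcases ihy with hy | ⟨a, ha, _, ⟨c, hc, b, hb, rfl⟩, rfl⟩
        · exact ⟨1, one_mem _, y, hy, one_mul y⟩
        · exact ⟨a * c, mul_mem (Submonoid.subset_closure ha) hc, b, hb, mul_assoc a c b⟩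
      exact .inr ⟨a, ha, _, ⟨c * c', mul_mem hc hc', b, hb, rfl⟩, by simp only [mul_assoc]⟩
    · rcases ihx with hx | ⟨a, ha, _, ⟨c, hc, b, hb, rfl⟩, rfl⟩ <;>
        rcases ihy with hy | ⟨a', ha', _, ⟨c', hc', b', hb', rfl⟩, rfl⟩
      · exact .inl (.mul hx hs hy)
      · exact .inr ⟨x * a', .mul hx hs ha', _, ⟨c', hc', b', hb', rfl⟩, by simp only [mul_assoc]⟩
      · exact .inr ⟨a, ha, _, ⟨c, hc, b * y, .mul hb hs hy, rfl⟩, by simp only [mul_assoc]⟩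
      · have hloop : b * a' ∈ C := Submonoid.subset_closure (.mul hb hs ha')
        exact .inr ⟨a, ha, _, ⟨c * (b * a') * c', mul_mem (mul_mem hc hloop) hc', b', hb', rfl⟩,
          by simp only [mul_assoc]⟩

theorem subset_pathLabels_insert :
    pathLabels h A T p q ∪
        pathLabels h A T p r * (Submonoid.closure (pathLabels h A T r r) * pathLabels h A T r q) ⊆
      pathLabels h A (insert r T) p q := by
  have hT : T ⊆ insert r T := Set.subset_insert r T
  have hr : r ∈ insert r T := Set.mem_insert r T
  rintro _ (hm | ⟨a, ha, _, ⟨c, hc, b, hb, rfl⟩, rfl⟩)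
  · exact hm.mono hT
  · have hc' : IsPathLabel h A (insert r T) r c r :=
      .of_mem_closure hr (Submonoid.closure_mono (fun _ hx => hx.mono hT) hc)
    exact .mul (ha.mono hT) hr (.mul hc' hr (hb.mono hT))

theorem pathLabels_insert :
    pathLabels h A (insert r T) p q = pathLabels h A T p q ∪
      pathLabels h A T p r * (Submonoid.closure (pathLabels h A T r r) * pathLabels h A T r q) :=
  pathLabels_insert_subset.antisymm subset_pathLabels_insert

theorem isRationalSubset_pathLabels (hA : A.Finite) (hT : T.Finite) (p q : N) :
    IsRationalSubset (pathLabels h A T p q) := by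
  induction T, hT using Set.Finite.induction_on generalizing p q with
  | empty => exact .finite _ ((hA.insert 1).subset pathLabels_empty_subset)
  | @insert r T _ _ ih =>
    rw [pathLabels_insert]
    exact (ih p q).union ((ih p r).mul ((ih r r).star.mul (ih r q)))

theorem pathLabels_univ_one (hA : Submonoid.closure A = ⊤) (n : N) :
    pathLabels h A Set.univ 1 n = h ⁻¹' {n} := by
  ext m
  refine ⟨fun hm => by simpa using hm.mul_map_eq, fun hm => ?_⟩
  have hmA : m ∈ Submonoid.closure A := hA ▸ Submonoid.mem_top m
  rw [Set.mem_preimage, Set.mem_singleton_iff] at hm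
  subst hm
  induction hmA using Submonoid.closure_induction_right with
  | one => rw [map_one]; exact .one 1
  | mul_right x _ a ha ihx =>
    rw [map_mul]
    exact .mul ihx (Set.mem_univ _) (.letter _ ha)

end PathLabels

section Rational

variable {M : Type} [Monoid M]

theorem IsRationalSubset.biUnion {ι : Type*} {s : Set ι} (hs : s.Finite) {f : ι → Set M}
    (hf : ∀ i ∈ s, IsRationalSubset (f i)) : IsRationalSubset (⋃ i ∈ s, f i) := by
  induction s, hs using Set.Finite.induction_on with
  | empty => simpa using IsRationalSubset.finite ∅ Set.finite_empty
  | @insert i s _ _ ih =>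
    rw [Set.biUnion_insert]
    exact (hf i (Set.mem_insert i s)).union (ih fun j hj => hf j (Set.mem_insert_of_mem i hj))

theorem IsRecognizableSubset.isRationalSubset [Monoid.FG M] {L : Set M}
    (hL : IsRecognizableSubset L) : IsRationalSubset L := by
  obtain ⟨N, _, _, h, hL⟩ := hL
  obtain ⟨A, hA, hAfin⟩ := Monoid.fg_iff.1 ‹Monoid.FG M›
  rw [← hL, ← Set.biUnion_preimage_singleton]
  refine IsRationalSubset.biUnion (Set.toFinite _) fun n _ => ?_
  rw [← pathLabels_univ_one hA]
  exact isRationalSubset_pathLabels hAfin Set.finite_univ 1 n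

theorem IsRationalSubset.exists_fg_subset {L : Set M} (hL : IsRationalSubset L) :
    ∃ P : Submonoid M, P.FG ∧ L ⊆ P := by
  induction hL with
  | finite L hL => exact ⟨_, (Submonoid.fg_iff _).2 ⟨L, rfl, hL⟩, Submonoid.subset_closure⟩
  | union _ _ ihK ihL =>
    obtain ⟨P, hP, hKP⟩ := ihK
    obtain ⟨Q, hQ, hLQ⟩ := ihL
    exact ⟨P ⊔ Q, hP.sup hQ, Set.union_subset (hKP.trans (SetLike.coe_subset_coe.2 le_sup_left))
      (hLQ.trans (SetLike.coe_subset_coe.2 le_sup_right))⟩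
  | mul _ _ ihK ihL =>
    obtain ⟨P, hP, hKP⟩ := ihK
    obtain ⟨Q, hQ, hLQ⟩ := ihL
    refine ⟨P ⊔ Q, hP.sup hQ, ?_⟩
    rintro _ ⟨x, hx, y, hy, rfl⟩
    exact mul_mem (Submonoid.mem_sup_left (hKP hx)) (Submonoid.mem_sup_right (hLQ hy))
  | star _ ih =>
    obtain ⟨P, hP, hLP⟩ := ih
    exact ⟨P, hP, Submonoid.closure_le.2 hLP⟩

theorem isRecognizableSubset_univ : IsRecognizableSubset (Set.univ : Set M) :=
  ⟨Unit, inferInstance, inferInstance, 1, by simp⟩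

theorem Monoid.FG.of_isRationalSubset_univ (h : IsRationalSubset (Set.univ : Set M)) :
    Monoid.FG M := by
  obtain ⟨P, hP, hMP⟩ := h.exists_fg_subset
  rwa [Monoid.fg_def, ← top_le_iff.1 fun m _ => hMP (Set.mem_univ m)]

end Rational

/-- McKnight's theorem: a monoid is finitely generated iff every recognizable
subset is rational. -/
theorem mcknight_theorem (M : Type) [Monoid M] :
    Monoid.FG M ↔ ∀ L : Set M, IsRecognizableSubset L → IsRationalSubset L :=
  ⟨fun _ _ hL => hL.isRationalSubset,
    fun H => .of_isRationalSubset_univ (H _ isRecognizableSubset_univ)⟩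
end

section
/- Anisimov's Theorem: a finitely generated group G has a regular word problem (with respect to some, equivalently any, finite monoid generating set and presentation π: Σ* → G, the language {w ∈ Σ* : π(w) = 1} is regular) if and only if G is finite. -/
theorem aux_evalFrom {G : Type} [Group G] {α : Type} (π : FreeMonoid α →* G)
    (M : DFA α G) (hstep : ∀ g a, M.step g a = g * π (FreeMonoid.of a)) :
    ∀ (w : List α) (g : G), M.evalFrom g w = g * π (FreeMonoid.ofList w) := by
  intro w
  induction w with
  | nil => intro g; simp [DFA.evalFrom]
  | cons a w ih =>
      intro g
      have : M.evalFrom g (a :: w) = M.evalFrom (M.step g a) w := rfl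
      rw [this, ih, hstep]
      have : FreeMonoid.ofList (a :: w) = FreeMonoid.of a * FreeMonoid.ofList w := rfl
      rw [this, map_mul, mul_assoc]

/-- Anisimov's theorem: a finitely generated group has a regular word problem
(with respect to a presentation over a finite alphabet) iff it is finite. -/
theorem anisimov_theorem {G : Type} [Group G] {α : Type} [Fintype α]
    (π : FreeMonoid α →* G) (hπ : Function.Surjective π) :
    (∃ (σ : Type) (_ : Fintype σ) (M : DFA α σ),
        M.accepts = { w : List α | π (FreeMonoid.ofList w) = 1 }) ↔ Finite G := by
  constructor
  · rintro ⟨σ, _, M, hM⟩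
    -- if two words reach the same state, they have the same image
    have key : ∀ u v : List α, M.eval u = M.eval v →
        π (FreeMonoid.ofList u) = π (FreeMonoid.ofList v) := by
      intro u v huv
      obtain ⟨x, hx⟩ := hπ (π (FreeMonoid.ofList u))⁻¹
      have hux : π (FreeMonoid.ofList (u ++ FreeMonoid.toList x)) = 1 := by
        have : FreeMonoid.ofList (u ++ FreeMonoid.toList x)
            = FreeMonoid.ofList u * x := rfl
        rw [this, map_mul, hx, mul_inv_cancel]
      have hu : (u ++ FreeMonoid.toList x) ∈ M.accepts := by
        rw [hM]; exact hux
      have hv : (v ++ FreeMonoid.toList x) ∈ M.accepts := by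
        rw [DFA.mem_accepts] at hu ⊢
        have h1 : M.eval (u ++ FreeMonoid.toList x)
            = M.evalFrom (M.eval u) (FreeMonoid.toList x) := by
          simp [DFA.eval, DFA.evalFrom, List.foldl_append]
        have h2 : M.eval (v ++ FreeMonoid.toList x)
            = M.evalFrom (M.eval v) (FreeMonoid.toList x) := by
          simp [DFA.eval, DFA.evalFrom, List.foldl_append]
        rw [h2, ← huv, ← h1]; exact hu
      rw [hM] at hv
      have hvx : π (FreeMonoid.ofList (v ++ FreeMonoid.toList x)) = 1 := hv
      have : FreeMonoid.ofList (v ++ FreeMonoid.toList x)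
          = FreeMonoid.ofList v * x := rfl
      rw [this, map_mul, hx] at hvx
      have := mul_inv_eq_one.mp hvx
      exact this.symm
    -- surjection from σ onto G
    classical
    let f : σ → G := fun s =>
      if h : ∃ u : List α, M.eval u = s then π (FreeMonoid.ofList h.choose) else 1
    have hf : Function.Surjective f := by
      intro g
      obtain ⟨x, hx⟩ := hπ g
      refine ⟨M.eval (FreeMonoid.toList x), ?_⟩
      have h : ∃ u : List α, M.eval u = M.eval (FreeMonoid.toList x) :=
        ⟨FreeMonoid.toList x, rfl⟩
      simp only [f, dif_pos h]
      have := key h.choose (FreeMonoid.toList x) h.choose_spec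
      rw [this]
      have : FreeMonoid.ofList (FreeMonoid.toList x) = x := FreeMonoid.ofList_toList x
      rw [this, hx]
    exact Finite.of_surjective f hf
  · intro hG
    have : Fintype G := Fintype.ofFinite G
    refine ⟨G, this, ⟨fun g a => g * π (FreeMonoid.of a), 1, {1}⟩, ?_⟩
    ext w
    rw [DFA.mem_accepts]
    have := aux_evalFrom π ⟨fun g a => g * π (FreeMonoid.of a), 1, {1}⟩
      (fun g a => rfl) w 1
    simp only [DFA.eval, this, one_mul]
    rfl
end

section
/- Anisimov–Seifert Theorem: a subgroup H of a group G is a rational subset of G if and only if H is finitely generated. -/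
open Pointwise

/-!
A finitely generated subgroup `⟨S⟩` is the submonoid generated by `S ∪ S⁻¹`, hence rational.
Conversely, induction on rational sets `L` proves a two-sided strengthening: if `a L b ⊆ H`
then `a L b ⊆ K` for some finitely generated `K ≤ H`. Products `K L` reduce to their factors
by fixing `k₀ ∈ K`, `l₀ ∈ L` and writing `a k l b = (a k l₀ b) (a k₀ l₀ b)⁻¹ (a k₀ l b)`;
for `L*`, the unit `1 ∈ L*` forces `a b ∈ H`, and `a x y b = (a x b) (a b)⁻¹ (a y b)`.
With `a = b = 1` and `L = H` this gives `H ⊆ K ≤ H`.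
-/

section

variable {G : Type} [Group G]

theorem Subgroup.fg_closure_of_finite {S : Set G} (hS : S.Finite) : (Subgroup.closure S).FG :=
  (Subgroup.fg_iff _).mpr ⟨S, rfl, hS⟩

def Set.IsFGBounded (L : Set G) : Prop :=
  ∀ (H : Subgroup G) (a b : G), Set.MapsTo (fun x => a * x * b) L H →
    ∃ K ≤ H, K.FG ∧ Set.MapsTo (fun x => a * x * b) L K

namespace Set.IsFGBounded

theorem of_finite {L : Set G} (hL : L.Finite) : L.IsFGBounded := by
  intro H a b hLH
  refine ⟨Subgroup.closure ((fun x => a * x * b) '' L), ?_, ?_, ?_⟩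
  · exact (Subgroup.closure_le H).mpr (Set.mapsTo_iff_image_subset.mp hLH)
  · exact Subgroup.fg_closure_of_finite (hL.image _)
  · exact fun x hx => Subgroup.subset_closure (Set.mem_image_of_mem _ hx)

theorem union {K L : Set G} (hK : K.IsFGBounded) (hL : L.IsFGBounded) :
    (K ∪ L).IsFGBounded := by
  intro H a b hLH
  obtain ⟨K₁, hK₁H, hK₁, hK⟩ := hK H a b (hLH.mono_left Set.subset_union_left)
  obtain ⟨K₂, hK₂H, hK₂, hL⟩ := hL H a b (hLH.mono_left Set.subset_union_right)
  exact ⟨K₁ ⊔ K₂, sup_le hK₁H hK₂H, hK₁.sup hK₂, Set.mapsTo_union.mpr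
    ⟨hK.mono_right (SetLike.coe_mono le_sup_left),
      hL.mono_right (SetLike.coe_mono le_sup_right)⟩⟩

theorem mul {K L : Set G} (hK : K.IsFGBounded) (hL : L.IsFGBounded) :
    (K * L).IsFGBounded := by
  intro H a b hLH
  rcases K.eq_empty_or_nonempty with rfl | ⟨k₀, hk₀⟩
  · exact ⟨⊥, bot_le, Subgroup.FG.bot, by simpa using Set.mapsTo_empty _ _⟩
  rcases L.eq_empty_or_nonempty with rfl | ⟨l₀, hl₀⟩
  · exact ⟨⊥, bot_le, Subgroup.FG.bot, by simpa using Set.mapsTo_empty _ _⟩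
  obtain ⟨K₁, hK₁H, hK₁, hK⟩ := hK H a (l₀ * b) fun k hk => by
    simpa [mul_assoc] using hLH (Set.mul_mem_mul hk hl₀)
  obtain ⟨K₂, hK₂H, hK₂, hL⟩ := hL H (a * k₀) b fun l hl => by
    simpa [mul_assoc] using hLH (Set.mul_mem_mul hk₀ hl)
  refine ⟨K₁ ⊔ K₂, sup_le hK₁H hK₂H, hK₁.sup hK₂, ?_⟩
  rintro _ ⟨k, hk, l, hl, rfl⟩
  have key : a * (k * l) * b =
      (a * k * (l₀ * b)) * (a * k₀ * (l₀ * b))⁻¹ * (a * k₀ * l * b) := by group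
  simp only [key]
  exact mul_mem (mul_mem (Subgroup.mem_sup_left (hK hk))
    (inv_mem (Subgroup.mem_sup_left (hK hk₀)))) (Subgroup.mem_sup_right (hL hl))

theorem submonoidClosure {L : Set G} (hL : L.IsFGBounded) :
    (Submonoid.closure L : Set G).IsFGBounded := by
  intro H a b hLH
  obtain ⟨K₁, hK₁H, hK₁, hL⟩ := hL H a b (hLH.mono_left Submonoid.subset_closure)
  have hab : a * b ∈ H := by simpa using hLH (one_mem (Submonoid.closure L))
  refine ⟨K₁ ⊔ Subgroup.closure {a * b},
    sup_le hK₁H ((Subgroup.closure_le H).mpr (Set.singleton_subset_iff.mpr hab)),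
    hK₁.sup (Subgroup.fg_closure_of_finite (Set.finite_singleton _)), ?_⟩
  have hab' : a * b ∈ K₁ ⊔ Subgroup.closure {a * b} :=
    Subgroup.mem_sup_right (Subgroup.subset_closure rfl)
  intro x hx
  induction hx using Submonoid.closure_induction with
  | mem x hx => exact Subgroup.mem_sup_left (hL hx)
  | one => simpa using hab'
  | mul x y _ _ hx hy =>
    have key : a * (x * y) * b = (a * x * b) * (a * b)⁻¹ * (a * y * b) := by group
    simp only [key]
    exact mul_mem (mul_mem hx (inv_mem hab')) hy

end Set.IsFGBounded

theorem IsRationalSubset.isFGBounded {L : Set G} (hL : IsRationalSubset L) : L.IsFGBounded := by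
  induction hL with
  | finite L hL => exact .of_finite hL
  | union _ _ hK hL => exact hK.union hL
  | mul _ _ hK hL => exact hK.mul hL
  | star _ hL => exact hL.submonoidClosure

theorem IsRationalSubset.subgroup_fg {H : Subgroup G} (hH : IsRationalSubset (H : Set G)) :
    H.FG := by
  obtain ⟨K, hKH, hK, hHK⟩ := hH.isFGBounded H 1 1 fun x hx => by simpa using hx
  rwa [le_antisymm hKH fun x hx => by simpa using hHK hx] at hK

theorem Subgroup.FG.isRationalSubset {H : Subgroup G} (hH : H.FG) :
    IsRationalSubset (H : Set G) := by
  obtain ⟨S, rfl, hS⟩ := (Subgroup.fg_iff H).mp hH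
  rw [← Subgroup.coe_toSubmonoid, Subgroup.closure_toSubmonoid]
  exact .star (.finite _ (hS.union hS.inv))

end

/-- Anisimov–Seifert: a subgroup of a group is a rational subset iff it is
finitely generated. -/
theorem anisimov_seifert {G : Type} [Group G] (H : Subgroup G) :
    IsRationalSubset (H : Set G) ↔ H.FG :=
  ⟨IsRationalSubset.subgroup_fg, Subgroup.FG.isRationalSubset⟩
end

section
/- Serre's characterization of free groups: a group G is free if and only if G acts freely and without edge inversion on a tree. In particular, every subgroup of a free group is free. -/
/-!
A free group `F(ι)` acts freely and without inversions, by left multiplication, on its Cayley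
graph with respect to the basis `ι`. That graph is a tree: every dart `(u, v)` satisfies
`v = u * a` for a letter `a`, so the letters read along a cycle would form a nonempty reduced
word equal to `1`.

Conversely, let `G` act freely and without inversions on a tree `T`. Orienting each `G`-orbit
of edges and labelling every dart by its oriented orbit gives a `G`-invariant labelling by letters
of the free group `F` on the edge orbits, and integrating it along geodesics from a base vertex
gives `f : T → F` with `f v = f u * ℓ (u, v)` on every dart. Two consecutive letters along a path
can only cancel if the second dart lies in the orbit of the reverse of the first, and freeness
forces it to be that reverse; so the word read along a path is reduced and `f` is injective. By
invariance of the labels, `g ↦ (f v₀)⁻¹ * f (g • v₀)` is then an injective homomorphism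
`G → F`, and `G` is free by the Nielsen–Schreier theorem, which is also the second statement.
-/

namespace FreeGroup

variable {α : Type*}

theorem inv_mk_singleton (a : α) (b : Bool) : (mk [(a, b)])⁻¹ = mk [(a, !b)] := by
  rw [inv_mk]
  rfl

theorem prod_map_mk_singleton {β : Type*} (ℓ : β → α × Bool) (L : List β) :
    (L.map fun b => mk [ℓ b]).prod = mk (L.map ℓ) := by
  induction L with
  | nil => rfl
  | cons b L ih =>
    rw [List.map_cons, List.prod_cons, ih, mul_mk]
    rfl

theorem mk_ne_one_of_isReduced {L : List (α × Bool)} (hL : IsReduced L) (hne : L ≠ []) :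
    mk L ≠ 1 := by
  classical
  rw [ne_eq, ← toWord_eq_nil_iff, toWord_mk, hL.reduce_eq]
  exact hne

end FreeGroup

namespace SimpleGraph

variable {V : Type*} {Γ : SimpleGraph V}

section Potential

variable {H : Type*} [Group H]

theorem Walk.eq_mul_prod_map_darts {c : Γ.Dart → H} {f : V → H}
    (hf : ∀ d : Γ.Dart, f d.snd = f d.fst * c d) {u v : V} (w : Γ.Walk u v) :
    f v = f u * (w.darts.map c).prod := by
  induction w with
  | nil => simp
  | cons h w ih =>
    rw [darts_cons, List.map_cons, List.prod_cons, ← mul_assoc, ← hf ⟨(_, _), h⟩]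
    exact ih

theorem IsTree.exists_potential (hT : Γ.IsTree) (c : Γ.Dart → H)
    (hc : ∀ d : Γ.Dart, c d.symm = (c d)⁻¹) :
    ∃ f : V → H, ∀ d : Γ.Dart, f d.snd = f d.fst * c d := by
  classical
  obtain ⟨v₀⟩ := hT.connected.nonempty
  let path (v : V) : Γ.Path v₀ v := (hT.connected v₀ v).some.toPath
  refine ⟨fun v => ((path v).1.darts.map c).prod, fun ⟨⟨u, x⟩, h⟩ => ?_⟩
  by_cases hu : u ∈ (path x).1.support
  · simp only [hT.isAcyclic.path_concat (path u).2 (path x).2 h hu, Walk.darts_concat,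
      List.concat_eq_append, List.map_append, List.prod_append, List.map_cons, List.map_nil,
      List.prod_singleton]
  · have hx := hT.isAcyclic.mem_support_of_ne_mem_support_of_adj_of_isPath
      (path u).2 (path x).2 h hu
    simp only [hT.isAcyclic.path_concat (path x).2 (path u).2 h.symm hx, Walk.darts_concat,
      List.concat_eq_append, List.map_append, List.prod_append, List.map_cons, List.map_nil,
      List.prod_singleton]
    rw [mul_assoc, show c ⟨(x, u), h.symm⟩ = _ from hc ⟨(u, x), h⟩, inv_mul_cancel, mul_one]

theorem Preconnected.inv_mul_comp_hom_eq {c : Γ.Dart → H} {f : V → H}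
    (hΓ : Γ.Preconnected) (hf : ∀ d : Γ.Dart, f d.snd = f d.fst * c d)
    (φ : Γ →g Γ) (hφ : ∀ d, c (φ.mapDart d) = c d) (u v : V) :
    (f (φ u))⁻¹ * f (φ v) = (f u)⁻¹ * f v := by
  obtain ⟨w⟩ := hΓ u v
  rw [inv_mul_eq_iff_eq_mul, inv_mul_eq_iff_eq_mul.mpr (w.eq_mul_prod_map_darts hf),
    (w.map φ).eq_mul_prod_map_darts hf, Walk.darts_map, List.map_map]
  simp only [Function.comp_def, hφ]

end Potential

section ReducedLabelling

variable {α : Type*}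

def CancelsOnlyOnBacktracks (ℓ : Γ.Dart → α × Bool) : Prop :=
  ∀ d d' : Γ.Dart, d.snd = d'.fst → (ℓ d).1 = (ℓ d').1 → (ℓ d).2 ≠ (ℓ d').2 → d' = d.symm

theorem Walk.IsTrail.isReduced_map_darts {ℓ : Γ.Dart → α × Bool}
    (hℓ : CancelsOnlyOnBacktracks ℓ) {u v : V} {w : Γ.Walk u v} (hw : w.IsTrail) :
    FreeGroup.IsReduced (w.darts.map ℓ) := by
  induction w with
  | nil => exact FreeGroup.IsReduced.nil
  | cons h p ih =>
    rw [Walk.isTrail_cons] at hw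
    cases p with
    | nil => exact FreeGroup.IsReduced.singleton
    | cons h' q =>
      refine FreeGroup.isReduced_cons_cons.mpr ⟨fun h1 => ?_, ih hw.1⟩
      by_contra h2
      cases hℓ _ _ rfl h1 h2
      exact hw.2 (by simp [Sym2.eq_swap])

theorem Walk.IsTrail.ne_of_not_nil {ℓ : Γ.Dart → α × Bool} {f : V → FreeGroup α}
    (hf : ∀ d : Γ.Dart, f d.snd = f d.fst * FreeGroup.mk [ℓ d])
    (hℓ : CancelsOnlyOnBacktracks ℓ) {u v : V} {w : Γ.Walk u v} (hw : w.IsTrail)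
    (hnil : ¬ w.Nil) : f u ≠ f v := by
  rw [w.eq_mul_prod_map_darts hf, FreeGroup.prod_map_mk_singleton, ne_eq, left_eq_mul]
  refine FreeGroup.mk_ne_one_of_isReduced (hw.isReduced_map_darts hℓ) ?_
  simpa [Walk.darts_eq_nil] using hnil

theorem isAcyclic_of_potential {ℓ : Γ.Dart → α × Bool} {f : V → FreeGroup α}
    (hf : ∀ d : Γ.Dart, f d.snd = f d.fst * FreeGroup.mk [ℓ d])
    (hℓ : CancelsOnlyOnBacktracks ℓ) : Γ.IsAcyclic :=
  fun _ _ hc => hc.isTrail.ne_of_not_nil hf hℓ hc.not_nil rfl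

theorem Preconnected.injective_of_potential {ℓ : Γ.Dart → α × Bool} {f : V → FreeGroup α}
    (hΓ : Γ.Preconnected) (hf : ∀ d : Γ.Dart, f d.snd = f d.fst * FreeGroup.mk [ℓ d])
    (hℓ : CancelsOnlyOnBacktracks ℓ) : Function.Injective f := by
  classical
  intro u v huv
  by_contra hne
  obtain ⟨w⟩ := hΓ u v
  exact w.toPath.2.isTrail.ne_of_not_nil hf hℓ (Walk.not_nil_of_ne hne) huv

end ReducedLabelling

section Cayley

variable {M : Type*} [Group M] {s : Set M}

theorem Reachable.mulCayley_mul_left {u v : M} (h : (mulCayley s).Reachable u v) (g : M) :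
    (mulCayley s).Reachable (g * u) (g * v) :=
  h.map ⟨(g * ·), mulCayley_adj_mul_iff_right.mpr⟩

theorem mulCayley_connected (hs : Subgroup.closure s = ⊤) : (mulCayley s).Connected := by
  have reachable_one (x : M) : (mulCayley s).Reachable 1 x := by
    induction (hs ▸ Subgroup.mem_top x : x ∈ Subgroup.closure s) using
      Subgroup.closure_induction with
    | mem x hx =>
      by_cases h : 1 = x
      · rw [h]
      · exact ((mulCayley_adj _ _ _).mpr ⟨h, Or.inl (by simpa using hx)⟩).reachable
    | one => rfl
    | mul x y _ _ hx hy => exact hx.trans (by simpa using hy.mulCayley_mul_left x)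
    | inv x _ hx =>
      have := hx.mulCayley_mul_left x⁻¹
      rw [mul_one, inv_mul_cancel] at this
      exact this.symm
  have : Nonempty M := ⟨1⟩
  exact ⟨fun u v => (reachable_one u).symm.trans (reachable_one v)⟩

end Cayley

end SimpleGraph

namespace FreeGroup

open SimpleGraph

variable {α : Type*}

theorem exists_eq_mul_mk_of_mulCayley_adj {u v : FreeGroup α}
    (h : (mulCayley (Set.range of)).Adj u v) : ∃ p : α × Bool, v = u * mk [p] := by
  obtain ⟨-, ⟨a, ha⟩ | ⟨a, ha⟩⟩ := (mulCayley_adj _ _ _).mp h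
  · exact ⟨(a, true), by rw [← of, ha, mul_inv_cancel_left]⟩
  · refine ⟨(a, false), ?_⟩
    rw [← Bool.not_true, ← inv_mk_singleton, ← of, ha, mul_inv_rev, inv_inv, mul_inv_cancel_left]

theorem isTree_mulCayley : (mulCayley (Set.range (of : α → FreeGroup α))).IsTree := by
  choose ℓ hℓ using fun d : (mulCayley (Set.range (of : α → FreeGroup α))).Dart =>
    exists_eq_mul_mk_of_mulCayley_adj d.adj
  refine ⟨mulCayley_connected (closure_range_of α), isAcyclic_of_potential (f := id) hℓ ?_⟩
  intro d d' hdd' h1 h2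
  have hinv : mk [ℓ d'] = (mk [ℓ d])⁻¹ := by
    rw [inv_mk_singleton, ← Bool.eq_not.mpr h2.symm, h1]
  refine Dart.ext _ _ (Prod.ext hdd'.symm ?_)
  rw [hℓ d', ← hdd', hℓ d, hinv, mul_inv_cancel_right]
  rfl

end FreeGroup

open SimpleGraph

universe u

theorem exists_free_action_on_tree_of_mulEquiv {G : Type*} [Group G] {ι : Type u}
    (e : G ≃* FreeGroup ι) :
    ∃ (V : Type u) (Γ : SimpleGraph V) (_ : MulAction G V),
      Γ.IsTree ∧
      (∀ (g : G) (u v : V), Γ.Adj u v → Γ.Adj (g • u) (g • v)) ∧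
      (∀ (g : G) (v : V), g • v = v → g = 1) ∧
      (∀ (g : G) (u v : V), Γ.Adj u v → ¬ (g • u = v ∧ g • v = u)) := by
  let _ : MulAction G (FreeGroup ι) := MulAction.compHom _ e.toMonoidHom
  have hfree (g : G) (v : FreeGroup ι) (h : g • v = v) : g = 1 :=
    e.map_eq_one_iff.mp (mul_eq_right.mp h)
  refine ⟨FreeGroup ι, mulCayley (Set.range FreeGroup.of), ‹_›, FreeGroup.isTree_mulCayley,
    fun g u v h => mulCayley_adj_mul_iff_right.mpr h, hfree, fun g u v h ⟨hu, hv⟩ => h.ne ?_⟩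
  have hsq : e g ^ 2 = 1 := by
    rw [← map_pow, hfree (g ^ 2) u (by rw [pow_two, mul_smul, hu, hv]), map_one]
  rw [← hu, e.map_eq_one_iff.mp ((pow_eq_one_iff.mp hsq).resolve_right two_ne_zero), one_smul]

theorem Function.Involutive.exists_injective_signed {β : Type*} {σ : β → β}
    (hσ : Function.Involutive σ) :
    ∃ s : β → β × Bool, Function.Injective s ∧ ∀ o, σ o ≠ o → s (σ o) = ((s o).1, !(s o).2) := by
  let _ : LinearOrder β := WellOrderingRel.isWellOrder.linearOrder
  refine ⟨fun o => if o < σ o then (o, true) else (σ o, false), fun o o' h => ?_, fun o ho => ?_⟩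
  · dsimp only at h
    split_ifs at h <;> simp_all [hσ.injective.eq_iff]
  · dsimp only
    rw [hσ o]
    rcases lt_or_gt_of_ne ho with h | h <;> simp [h, h.not_gt]

open MulAction

section OrbitLabelling

variable {G V : Type*} [Group G] [MulAction G V]

variable (G V) in
def orbitSwap : orbitRel.Quotient G (V × V) → orbitRel.Quotient G (V × V) :=
  Quotient.map Prod.swap fun _ _ ⟨g, hg⟩ => ⟨g, by rw [← hg]; rfl⟩

theorem orbitSwap_involutive : Function.Involutive (orbitSwap G V) := by
  rintro ⟨p⟩
  rfl

theorem exists_invariant_dart_labelling {Γ : SimpleGraph V}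
    (hfree : ∀ (g : G) (v : V), g • v = v → g = 1)
    (hinv : ∀ (g : G) (u v : V), Γ.Adj u v → ¬ (g • u = v ∧ g • v = u)) :
    ∃ ℓ : Γ.Dart → orbitRel.Quotient G (V × V) × Bool,
      (∀ d, ℓ d.symm = ((ℓ d).1, !(ℓ d).2)) ∧
      (∀ (g : G) (d d' : Γ.Dart), g • d.toProd = d'.toProd → ℓ d' = ℓ d) ∧
      CancelsOnlyOnBacktracks ℓ := by
  obtain ⟨s, hs_inj, hs_swap⟩ := (orbitSwap_involutive (G := G) (V := V)).exists_injective_signed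
  let q : V × V → orbitRel.Quotient G (V × V) := Quotient.mk _
  have hℓ_symm (d : Γ.Dart) : s (q d.symm.toProd) = ((s (q d.toProd)).1, !(s (q d.toProd)).2) :=
    hs_swap (q d.toProd) fun h => by
      obtain ⟨g, hg⟩ := Quotient.exact (h : q d.symm.toProd = q d.toProd)
      exact hinv g _ _ d.adj (Prod.ext_iff.mp hg)
  refine ⟨fun d => s (q d.toProd), hℓ_symm, fun g d d' h => congrArg s (Quotient.sound ⟨g, h⟩),
    fun d d' hdd' h1 h2 => ?_⟩
  have : q d'.toProd = q d.symm.toProd :=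
    hs_inj (by rw [hℓ_symm]; exact Prod.ext h1.symm (Bool.eq_not.mpr h2.symm))
  obtain ⟨g, hg⟩ := Quotient.exact this
  have hg1 : g = 1 := hfree g d.snd ((Prod.ext_iff.mp hg).1.trans hdd'.symm)
  refine Dart.ext _ _ (Prod.ext hdd'.symm ?_)
  have hg2 := (Prod.ext_iff.mp hg).2
  simp only [hg1, one_smul] at hg2
  exact hg2.symm

theorem exists_monoidHom_injective_of_inv_mul_smul {H : Type*} [Group H] [Nonempty V]
    {f : V → H} (hf_inj : Function.Injective f) (hfree : ∀ (g : G) (v : V), g • v = v → g = 1)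
    (hf : ∀ (g : G) (u v : V), (f (g • u))⁻¹ * f (g • v) = (f u)⁻¹ * f v) :
    ∃ φ : G →* H, Function.Injective φ := by
  obtain ⟨v₀⟩ := ‹Nonempty V›
  refine ⟨MonoidHom.mk' (fun g => (f v₀)⁻¹ * f (g • v₀)) fun g h => ?_, fun g h hgh => ?_⟩
  · rw [mul_smul, ← hf g v₀ (h • v₀)]
    group
  · have hgh' : g • v₀ = h • v₀ := hf_inj (mul_left_cancel hgh)
    exact (inv_mul_eq_one.mp (hfree (h⁻¹ * g) v₀ (by rw [mul_smul, hgh', inv_smul_smul]))).symm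

end OrbitLabelling

theorem SimpleGraph.IsTree.isFreeGroup_of_free_action {G V : Type*} [Group G] [MulAction G V]
    {Γ : SimpleGraph V} (hT : Γ.IsTree)
    (hadj : ∀ (g : G) (u v : V), Γ.Adj u v → Γ.Adj (g • u) (g • v))
    (hfree : ∀ (g : G) (v : V), g • v = v → g = 1)
    (hinv : ∀ (g : G) (u v : V), Γ.Adj u v → ¬ (g • u = v ∧ g • v = u)) : IsFreeGroup G := by
  obtain ⟨ℓ, hℓ_symm, hℓ_smul, hℓ⟩ := exists_invariant_dart_labelling hfree hinv
  obtain ⟨f, hf⟩ := hT.exists_potential (fun d => FreeGroup.mk [ℓ d]) fun d => by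
    rw [hℓ_symm, FreeGroup.inv_mk_singleton]
  have hf_smul (g : G) := hT.connected.preconnected.inv_mul_comp_hom_eq hf
    ⟨(g • ·), hadj g _ _⟩ fun d => congrArg (FreeGroup.mk [·]) (hℓ_smul g d _ rfl)
  have := hT.connected.nonempty
  obtain ⟨φ, hφ⟩ := exists_monoidHom_injective_of_inv_mul_smul
    (hT.connected.preconnected.injective_of_potential hf hℓ) hfree hf_smul
  exact IsFreeGroup.ofMulEquiv (MonoidHom.ofInjective hφ).symm

/-- Serre's characterization: a group is free iff it acts freely and without
edge inversion on a tree; in particular, subgroups of free groups are free. -/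
theorem serre_free_iff_acts_freely_on_tree (G : Type) [Group G] :
    ((∃ ι : Type, Nonempty (G ≃* FreeGroup ι)) ↔
      ∃ (V : Type) (Γ : SimpleGraph V) (_ : MulAction G V),
        Γ.IsTree ∧
        (∀ (g : G) (u v : V), Γ.Adj u v → Γ.Adj (g • u) (g • v)) ∧
        (∀ (g : G) (v : V), g • v = v → g = 1) ∧
        (∀ (g : G) (u v : V), Γ.Adj u v → ¬ (g • u = v ∧ g • v = u))) ∧
    (∀ (ι : Type) (H : Subgroup (FreeGroup ι)),
        ∃ κ : Type, Nonempty (H ≃* FreeGroup κ)) := by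
  refine ⟨⟨fun ⟨_, ⟨e⟩⟩ => exists_free_action_on_tree_of_mulEquiv e, ?_⟩, fun _ H => ?_⟩
  · rintro ⟨V, Γ, _, hT, hadj, hfree, hinv⟩
    have := hT.isFreeGroup_of_free_action hadj hfree hinv
    exact ⟨IsFreeGroup.Generators G, ⟨IsFreeGroup.toFreeGroup G⟩⟩
  · exact ⟨IsFreeGroup.Generators H, ⟨IsFreeGroup.toFreeGroup H⟩⟩
end

section
/- For any pregroup P, the rewriting system S_P on P* with rules 1_P → ε, ab → [ab] whenever (a,b) ∈ D, and ab → [ac][c̄b] whenever (a,c),(c̄,b) ∈ D, is confluent; consequently the canonical map P → U(P) into the universal group is injective. -/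
/-- A pregroup in the sense of Stallings: a set with a partial multiplication
(encoded by `Option`), an involution and a unit, satisfying (P1)–(P4). -/
structure Pregroup (P : Type) where
  one : P
  inv : P → P
  mul : P → P → Option P
  inv_inv : ∀ x, inv (inv x) = x
  one_mul : ∀ x, mul one x = some x
  mul_one : ∀ x, mul x one = some x
  inv_mul : ∀ x, mul (inv x) x = some one
  mul_inv : ∀ x, mul x (inv x) = some one
  assoc_defined : ∀ x y z xy yz, mul x y = some xy → mul y z = some yz →
    ((mul xy z).isSome ↔ (mul x yz).isSome)
  assoc : ∀ x y z xy yz, mul x y = some xy → mul y z = some yz →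
    ∀ a ∈ mul xy z, ∀ b ∈ mul x yz, a = b
  p4 : ∀ w x y z xy, mul x y = some xy → (mul w x).isSome → (mul y z).isSome →
    (mul w xy).isSome ∨ (mul xy z).isSome

/-- The rewriting system `S_P` on words over a pregroup: erase the unit,
multiply two adjacent multipliable letters, and shift by an interleaving
element `c` (the symmetric rule `ab → [ac][c̄b]`). -/
def Pregroup.Step {P : Type} (PG : Pregroup P) (s t : List P) : Prop :=
  (∃ u v, s = u ++ [PG.one] ++ v ∧ t = u ++ v) ∨
  (∃ u v a b c, PG.mul a b = some c ∧ s = u ++ [a, b] ++ v ∧ t = u ++ [c] ++ v) ∨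
  (∃ u v a b c ac cb, PG.mul a c = some ac ∧ PG.mul (PG.inv c) b = some cb ∧
      s = u ++ [a, b] ++ v ∧ t = u ++ [ac, cb] ++ v)

namespace Pregroup

variable {P : Type} {PG : Pregroup P}

/-- `mul xy z = some r → mul x yz = some r`. -/
lemma assoc_some {x y z xy yz r : P} (h1 : PG.mul x y = some xy) (h2 : PG.mul y z = some yz)
    (h3 : PG.mul xy z = some r) : PG.mul x yz = some r := by
  have hd := (PG.assoc_defined x y z xy yz h1 h2).1 (by rw [h3]; rfl)
  obtain ⟨b, hb⟩ := Option.isSome_iff_exists.1 hd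
  have := PG.assoc x y z xy yz h1 h2 r (by rw [h3]; rfl) b (by rw [hb]; rfl)
  rw [hb, this]

lemma assoc_some' {x y z xy yz r : P} (h1 : PG.mul x y = some xy) (h2 : PG.mul y z = some yz)
    (h3 : PG.mul x yz = some r) : PG.mul xy z = some r := by
  have hd := (PG.assoc_defined x y z xy yz h1 h2).2 (by rw [h3]; rfl)
  obtain ⟨b, hb⟩ := Option.isSome_iff_exists.1 hd
  have := PG.assoc x y z xy yz h1 h2 b (by rw [hb]; rfl) r (by rw [h3]; rfl)
  rw [hb, this]

/-- definedness transfer -/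
lemma assoc_isSome {x y z xy yz : P} (h1 : PG.mul x y = some xy) (h2 : PG.mul y z = some yz) :
    (PG.mul xy z).isSome ↔ (PG.mul x yz).isSome :=
  PG.assoc_defined x y z xy yz h1 h2

lemma mul_inv_cancel_right {a c ac : P} (h : PG.mul a c = some ac) :
    PG.mul ac (PG.inv c) = some a :=
  assoc_some' h (PG.mul_inv c) (PG.mul_one a)

lemma inv_mul_cancel_left {c b cb : P} (h : PG.mul c b = some cb) :
    PG.mul (PG.inv c) cb = some b :=
  assoc_some (PG.inv_mul c) h (PG.one_mul b)

lemma mul_inv_mul {c b cb : P} (h : PG.mul (PG.inv c) b = some cb) :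
    PG.mul c cb = some b := by
  have := inv_mul_cancel_left (PG := PG) h
  rwa [PG.inv_inv] at this

/-- L5 : products recombine -/
lemma shift_mul {a c ac b cb e : P} (h1 : PG.mul a c = some ac)
    (h2 : PG.mul (PG.inv c) b = some cb) (h3 : PG.mul a b = some e) :
    PG.mul ac cb = some e :=
  assoc_some (mul_inv_cancel_right h1) h2 h3

lemma shift_mul' {a c ac b cb e : P} (h1 : PG.mul a c = some ac)
    (h2 : PG.mul (PG.inv c) b = some cb) (h3 : PG.mul ac cb = some e) :
    PG.mul a b = some e :=
  assoc_some' (mul_inv_cancel_right h1) h2 h3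

/-- Local rewriting rules. -/
inductive Loc (PG : Pregroup P) : List P → List P → Prop
  | one : Loc PG [PG.one] []
  | mul2 {a b c : P} (h : PG.mul a b = some c) : Loc PG [a, b] [c]
  | shift {a b c ac cb : P} (h1 : PG.mul a c = some ac)
      (h2 : PG.mul (PG.inv c) b = some cb) : Loc PG [a, b] [ac, cb]

lemma loc_step {W T : List P} (h : Loc PG W T) (u v : List P) :
    PG.Step (u ++ W ++ v) (u ++ T ++ v) := by
  cases h with
  | one => exact Or.inl ⟨u, v, rfl, by simp⟩
  | mul2 h => exact Or.inr (Or.inl ⟨u, v, _, _, _, h, rfl, rfl⟩)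
  | shift h1 h2 => exact Or.inr (Or.inr ⟨u, v, _, _, _, _, _, h1, h2, rfl, rfl⟩)

lemma step_iff {s t : List P} :
    PG.Step s t ↔ ∃ u v W T, Loc PG W T ∧ s = u ++ W ++ v ∧ t = u ++ T ++ v := by
  constructor
  · rintro (⟨u, v, hs, ht⟩ | ⟨u, v, a, b, c, h, hs, ht⟩ |
      ⟨u, v, a, b, c, ac, cb, h1, h2, hs, ht⟩)
    · exact ⟨u, v, _, _, Loc.one, hs, by simpa using ht⟩
    · exact ⟨u, v, _, _, Loc.mul2 h, hs, ht⟩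
    · exact ⟨u, v, _, _, Loc.shift h1 h2, hs, ht⟩
  · rintro ⟨u, v, W, T, h, rfl, rfl⟩
    exact loc_step h u v


lemma step_of_eq {s t s' t' : List P} (h : PG.Step s t) (hs : s' = s) (ht : t' = t) :
    PG.Step s' t' := hs ▸ ht ▸ h

lemma reflGen_of_eq {r : List P → List P → Prop} {s t s' : List P}
    (h : Relation.ReflGen r s t) (hs : s' = s) : Relation.ReflGen r s' t := hs ▸ h

lemma disj_join {W1 T1 W2 T2 : List P} (h1 : Loc PG W1 T1) (h2 : Loc PG W2 T2)
    (u m v2 : List P) :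
    ∃ w, Relation.ReflGen PG.Step (u ++ T1 ++ (m ++ (W2 ++ v2))) w ∧
      Relation.ReflGen PG.Step ((u ++ (W1 ++ m)) ++ T2 ++ v2) w :=
  ⟨u ++ T1 ++ m ++ T2 ++ v2,
    .single (step_of_eq (loc_step h2 (u ++ T1 ++ m) v2) (by simp) (by simp)),
    .single (step_of_eq (loc_step h1 u (m ++ T2 ++ v2)) (by simp) (by simp))⟩

lemma half {W1 T1 W2 T2 : List P} (h1 : Loc PG W1 T1) (h2 : Loc PG W2 T2)
    (u v1 d v2 : List P) (he : W1 ++ v1 = d ++ (W2 ++ v2)) :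
    ∃ w, Relation.ReflGen PG.Step (u ++ T1 ++ v1) w ∧
      Relation.ReflGen PG.Step ((u ++ d) ++ T2 ++ v2) w := by
  cases h1 with
  | one =>
    cases d with
    | nil =>
      cases h2 with
      | one =>
        simp only [List.singleton_append, List.nil_append, List.cons.injEq, true_and] at he
        subst he
        exact ⟨u ++ v1, reflGen_of_eq .refl (by simp), reflGen_of_eq .refl (by simp)⟩
      | @mul2 p q pq hpq =>
        simp only [List.singleton_append, List.nil_append, List.cons_append,
          List.cons.injEq] at he
        obtain ⟨rfl, rfl⟩ := he
        have hq : q = pq := Option.some.inj ((PG.one_mul q).symm.trans hpq)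
        subst hq
        exact ⟨u ++ [q] ++ v2, reflGen_of_eq .refl (by simp),
          reflGen_of_eq .refl (by simp)⟩
      | @shift p q c pc cq hpc hcq =>
        simp only [List.singleton_append, List.nil_append, List.cons_append,
          List.cons.injEq] at he
        obtain ⟨rfl, rfl⟩ := he
        have hq : c = pc := Option.some.inj ((PG.one_mul c).symm.trans hpc)
        subst hq
        refine ⟨u ++ [q] ++ v2, reflGen_of_eq .refl (by simp), .single ?_⟩
        exact step_of_eq (loc_step (Loc.mul2 (mul_inv_mul hcq)) u v2) (by simp) rfl
    | cons g d' =>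
      simp only [List.singleton_append, List.cons_append, List.cons.injEq] at he
      obtain ⟨rfl, rfl⟩ := he
      obtain ⟨w, hw1, hw2⟩ := disj_join Loc.one h2 u d' v2
      refine ⟨w, reflGen_of_eq hw1 (by simp), reflGen_of_eq hw2 (by simp)⟩
  | @mul2 a b ab hab =>
    cases d with
    | nil =>
      cases h2 with
      | one =>
        simp only [List.cons_append, List.nil_append, List.singleton_append,
          List.cons.injEq] at he
        obtain ⟨rfl, rfl⟩ := he
        have hb : b = ab := Option.some.inj ((PG.one_mul b).symm.trans hab)
        subst hb
        exact ⟨u ++ [b] ++ v1, .refl, reflGen_of_eq .refl (by simp)⟩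
      | @mul2 p q pq hpq =>
        simp only [List.cons_append, List.nil_append, List.cons.injEq] at he
        obtain ⟨rfl, rfl, rfl⟩ := he
        have hq : ab = pq := Option.some.inj (hab.symm.trans hpq)
        subst hq
        exact ⟨u ++ [ab] ++ v1, .refl, reflGen_of_eq .refl (by simp)⟩
      | @shift p q c pc cq hpc hcq =>
        simp only [List.cons_append, List.nil_append, List.cons.injEq] at he
        obtain ⟨rfl, rfl, rfl⟩ := he
        refine ⟨u ++ [ab] ++ v1, .refl, .single ?_⟩
        exact step_of_eq (loc_step (Loc.mul2 (shift_mul hpc hcq hab)) u v1)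
          (by simp) rfl
    | cons g d' =>
      simp only [List.cons_append, List.cons.injEq] at he
      obtain ⟨rfl, he'⟩ := he
      cases d' with
      | nil =>
        cases h2 with
        | one =>
          simp only [List.nil_append, List.singleton_append, List.cons.injEq] at he'
          obtain ⟨rfl, rfl⟩ := he'
          have hb : a = ab := Option.some.inj ((PG.mul_one a).symm.trans hab)
          subst hb
          exact ⟨u ++ [a] ++ v1, .refl, reflGen_of_eq .refl (by simp)⟩
        | @mul2 p q pq hpq =>
          simp only [List.nil_append, List.cons_append, List.cons.injEq] at he'
          obtain ⟨rfl, rfl⟩ := he'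
          have h2' : PG.mul (PG.inv (PG.inv b)) q = some pq := by
            rw [PG.inv_inv]; exact hpq
          refine ⟨(u ++ [a]) ++ [pq] ++ v2, .single ?_, .refl⟩
          exact step_of_eq (loc_step (Loc.shift (mul_inv_cancel_right hab) h2')
            u v2) (by simp) (by simp)
        | @shift p q c pc cq hpc hcq =>
          simp only [List.nil_append, List.cons_append, List.cons.injEq] at he'
          obtain ⟨rfl, rfl⟩ := he'
          rcases hq : PG.mul b q with _ | br
          · have hq2 : PG.mul c cq = some q := mul_inv_mul hcq
            have hp4 := PG.p4 a b c cq pc hpc (by rw [hab]; rfl) (by rw [hq2]; rfl)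
            have hno : ¬ (PG.mul pc cq).isSome := by
              rw [← assoc_isSome (mul_inv_cancel_right hpc) hcq, hq]
              simp
            have hgs : (PG.mul a pc).isSome := by tauto
            obtain ⟨g, hg⟩ := Option.isSome_iff_exists.1 hgs
            refine ⟨u ++ [g] ++ ([cq] ++ v2), .single ?_, .single ?_⟩
            · exact step_of_eq (loc_step (Loc.shift (assoc_some' hab hpc hg) hcq)
                u v2) (by simp) (by simp)
            · exact step_of_eq (loc_step (Loc.mul2 hg) u ([cq] ++ v2))
                (by simp) (by simp)
          · have h2' : PG.mul (PG.inv (PG.inv b)) q = some br := by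
              rw [PG.inv_inv]; exact hq
            refine ⟨u ++ [a] ++ [br] ++ v2, .single ?_, .single ?_⟩
            · exact step_of_eq (loc_step (Loc.shift (mul_inv_cancel_right hab)
                h2') u v2) (by simp) (by simp)
            · exact step_of_eq (loc_step (Loc.mul2 (shift_mul hpc hcq hq))
                (u ++ [a]) v2) (by simp) (by simp)
      | cons g' d'' =>
        simp only [List.singleton_append, List.cons_append, List.cons.injEq] at he'
        obtain ⟨rfl, rfl⟩ := he'
        obtain ⟨w, hw1, hw2⟩ := disj_join (Loc.mul2 hab) h2 u d'' v2
        refine ⟨w, reflGen_of_eq hw1 (by simp), reflGen_of_eq hw2 (by simp)⟩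
  | @shift a b c ac cb hac hcb =>
    cases d with
    | nil =>
      cases h2 with
      | one =>
        simp only [List.cons_append, List.nil_append, List.singleton_append,
          List.cons.injEq] at he
        obtain ⟨rfl, rfl⟩ := he
        have hc : c = ac := Option.some.inj ((PG.one_mul c).symm.trans hac)
        subst hc
        refine ⟨u ++ [b] ++ v1, .single ?_, reflGen_of_eq .refl (by simp)⟩
        exact step_of_eq (loc_step (Loc.mul2 (mul_inv_mul hcb)) u v1) (by simp) rfl
      | @mul2 p q pq hpq =>
        simp only [List.cons_append, List.nil_append, List.cons.injEq] at he
        obtain ⟨rfl, rfl, rfl⟩ := he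
        refine ⟨u ++ [pq] ++ v1, .single ?_, reflGen_of_eq .refl (by simp)⟩
        exact step_of_eq (loc_step (Loc.mul2 (shift_mul hac hcb hpq)) u v1)
          (by simp) rfl
      | @shift p q c' pc c'q hpc hc'q =>
        simp only [List.cons_append, List.nil_append, List.cons.injEq] at he
        obtain ⟨rfl, rfl, rfl⟩ := he
        have e1 : PG.mul (PG.inv (PG.inv c)) cb = some b := by
          rw [PG.inv_inv]; exact mul_inv_mul hcb
        have e2 : PG.mul (PG.inv (PG.inv c')) c'q = some b := by
          rw [PG.inv_inv]; exact mul_inv_mul hc'q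
        refine ⟨u ++ [a, b] ++ v1, .single ?_, .single ?_⟩
        · exact step_of_eq (loc_step (Loc.shift (mul_inv_cancel_right hac)
            e1) u v1) rfl rfl
        · exact step_of_eq (loc_step (Loc.shift (mul_inv_cancel_right hpc)
            e2) u v1) (by simp) rfl
    | cons g d' =>
      simp only [List.cons_append, List.cons.injEq] at he
      obtain ⟨rfl, he'⟩ := he
      cases d' with
      | nil =>
        cases h2 with
        | one =>
          simp only [List.nil_append, List.singleton_append, List.cons.injEq] at he'
          obtain ⟨rfl, rfl⟩ := he'
          have hb : PG.inv c = cb :=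
            Option.some.inj ((PG.mul_one (PG.inv c)).symm.trans hcb)
          subst hb
          refine ⟨u ++ [a] ++ v1, .single ?_, reflGen_of_eq .refl (by simp)⟩
          exact step_of_eq (loc_step (Loc.mul2 (mul_inv_cancel_right hac)) u v1)
            (by simp) rfl
        | @mul2 p q pq hpq =>
          simp only [List.nil_append, List.cons_append, List.cons.injEq] at he'
          obtain ⟨rfl, rfl⟩ := he'
          rcases hm : PG.mul (PG.inv c) pq with _ | h
          · have hp4 := PG.p4 ac (PG.inv c) b q cb hcb
              (by rw [mul_inv_cancel_right hac]; rfl) (by rw [hpq]; rfl)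
            have hno : ¬ (PG.mul cb q).isSome := by
              rw [assoc_isSome hcb hpq, hm]; simp
            have hgs : (PG.mul ac cb).isSome := by tauto
            obtain ⟨g, hg⟩ := Option.isSome_iff_exists.1 hgs
            have hab : PG.mul a b = some g := shift_mul' hac hcb hg
            refine ⟨u ++ [g] ++ ([q] ++ v2), .single ?_, .single ?_⟩
            · exact step_of_eq (loc_step (Loc.mul2 hg) u ([q] ++ v2))
                (by simp) (by simp)
            · exact step_of_eq (loc_step (Loc.shift hab
                (c := b) (inv_mul_cancel_left hpq)) u v2) (by simp) (by simp)
          · have hcbq : PG.mul cb q = some h := assoc_some' hcb hpq hm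
            refine ⟨u ++ [ac] ++ [h] ++ v2, .single ?_, .single ?_⟩
            · exact step_of_eq (loc_step (Loc.mul2 hcbq) (u ++ [ac]) v2)
                (by simp) (by simp)
            · exact step_of_eq (loc_step (Loc.shift hac hm) u v2)
                (by simp) (by simp)
        | @shift p q c' pc c'q hpc hc'q =>
          simp only [List.nil_append, List.cons_append, List.cons.injEq] at he'
          obtain ⟨rfl, rfl⟩ := he'
          have e1 : PG.mul (PG.inv (PG.inv c)) cb = some b := by
            rw [PG.inv_inv]; exact mul_inv_mul hcb
          have e2 : PG.mul (PG.inv (PG.inv c')) c'q = some q := by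
            rw [PG.inv_inv]; exact mul_inv_mul hc'q
          refine ⟨u ++ [a, b] ++ ([q] ++ v2), .single ?_, .single ?_⟩
          · exact step_of_eq (loc_step (Loc.shift (mul_inv_cancel_right hac)
              e1) u ([q] ++ v2)) (by simp) (by simp)
          · exact step_of_eq (loc_step (Loc.shift (mul_inv_cancel_right hpc)
              e2) (u ++ [a]) v2) (by simp) (by simp)
      | cons g' d'' =>
        simp only [List.singleton_append, List.cons_append, List.cons.injEq] at he'
        obtain ⟨rfl, rfl⟩ := he'
        obtain ⟨w, hw1, hw2⟩ := disj_join (Loc.shift hac hcb) h2 u d'' v2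
        refine ⟨w, reflGen_of_eq hw1 (by simp), reflGen_of_eq hw2 (by simp)⟩

lemma diamond {x y z : List P} (hy : PG.Step x y) (hz : PG.Step x z) :
    ∃ w, Relation.ReflGen PG.Step y w ∧ Relation.ReflGen PG.Step z w := by
  rw [step_iff] at hy hz
  obtain ⟨u1, v1, W1, T1, h1, rfl, rfl⟩ := hy
  obtain ⟨u2, v2, W2, T2, h2, hx, rfl⟩ := hz
  rw [List.append_assoc, List.append_assoc] at hx
  rcases List.append_eq_append_iff.1 hx with ⟨d, rfl, hd⟩ | ⟨d, rfl, hd⟩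
  · obtain ⟨w, hw1, hw2⟩ := half h1 h2 u1 v1 d v2 hd
    exact ⟨w, reflGen_of_eq hw1 (by simp), reflGen_of_eq hw2 (by simp)⟩
  · obtain ⟨w, hw1, hw2⟩ := half h2 h1 u2 v2 d v1 hd
    exact ⟨w, reflGen_of_eq hw2 (by simp), reflGen_of_eq hw1 (by simp)⟩

lemma strong (a b c : List P) (hb : PG.Step a b) (hc : PG.Step a c) :
    ∃ d, Relation.ReflGen PG.Step b d ∧ Relation.ReflTransGen PG.Step c d := by
  obtain ⟨w, h1, h2⟩ := diamond hb hc
  exact ⟨w, h1, h2.to_reflTransGen⟩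

lemma confluent {x y z : List P} (hy : Relation.ReflTransGen PG.Step x y)
    (hz : Relation.ReflTransGen PG.Step x z) :
    ∃ w, Relation.ReflTransGen PG.Step y w ∧ Relation.ReflTransGen PG.Step z w :=
  Relation.church_rosser strong hy hz

lemma eqv_join {x y : List P} (h : Relation.EqvGen PG.Step x y) :
    Relation.Join (Relation.ReflTransGen PG.Step) x y := by
  have hJ : Equivalence (Relation.Join (Relation.ReflTransGen PG.Step)) :=
    Relation.equivalence_join_reflTransGen strong
  induction h with
  | rel a b h => exact ⟨b, Relation.ReflTransGen.single h, .refl⟩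
  | refl a => exact ⟨a, .refl, .refl⟩
  | symm a b _ ih => exact hJ.symm ih
  | trans a b c _ _ ih1 ih2 => exact hJ.trans ih1 ih2

lemma step_not_nil {t : List P} : ¬ PG.Step [] t := by
  rintro (⟨u, v, h, -⟩ | ⟨u, v, a, b, c, -, h, -⟩ | ⟨u, v, a, b, c, ac, cb, -, -, h, -⟩) <;>
    simp at h

lemma step_single {a : P} {t : List P} (h : PG.Step [a] t) : a = PG.one ∧ t = [] := by
  rcases h with ⟨u, v, h, ht⟩ | ⟨u, v, p, q, c, -, h, -⟩ |
    ⟨u, v, p, q, c, ac, cb, -, -, h, -⟩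
  · cases u with
    | nil =>
      simp only [List.nil_append, List.singleton_append, List.cons.injEq] at h
      obtain ⟨rfl, rfl⟩ := h
      simpa using ht
    | cons g u' =>
      simp only [List.cons_append, List.cons.injEq] at h
      obtain ⟨rfl, h2⟩ := h
      exact absurd h2 (by simp)
  · have := congrArg List.length h
    simp at this
    omega
  · have := congrArg List.length h
    simp at this
    omega

lemma single_reduct {a : P} {w : List P} (h : Relation.ReflTransGen PG.Step [a] w) :
    w = [a] ∨ (a = PG.one ∧ w = []) := by
  induction h with
  | refl => exact Or.inl rfl
  | tail h1 h2 ih =>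
    rcases ih with rfl | ⟨rfl, rfl⟩
    · rcases step_single h2 with ⟨rfl, rfl⟩
      exact Or.inr ⟨rfl, rfl⟩
    · exact absurd h2 step_not_nil

end Pregroup


/-- The rewriting system `S_P` of a pregroup is confluent; consequently the
canonical map from `P` into the universal group `U(P) = P*/S_P` is injective. -/
theorem pregroup_system_confluent_and_embeds {P : Type} (PG : Pregroup P) :
    (∀ x y z : List P, Relation.ReflTransGen PG.Step x y →
        Relation.ReflTransGen PG.Step x z →
        ∃ w, Relation.ReflTransGen PG.Step y w ∧ Relation.ReflTransGen PG.Step z w) ∧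
    Function.Injective (fun a : P => Quot.mk (Relation.EqvGen PG.Step) [a]) := by
  constructor
  · intro x y z hy hz
    exact Pregroup.confluent hy hz
  · intro a b h
    simp only at h
    have h3 := Quot.eqvGen_exact h
    rw [Equivalence.eqvGen_eq (Relation.EqvGen.is_equivalence _)] at h3
    obtain ⟨w, ha, hb⟩ := Pregroup.eqv_join h3
    rcases Pregroup.single_reduct ha with rfl | ⟨rfl, rfl⟩
    · rcases Pregroup.single_reduct hb with h1 | ⟨rfl, h1⟩
      · injection h1.symm with h2 _; exact h2.symm
      · simp at h1
    · rcases Pregroup.single_reduct hb with h1 | ⟨rfl, -⟩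
      · simp at h1
      · rfl
end

section
/- Let Γ and Γ' be graphs of uniformly bounded degree. If Γ has finite treewidth and Γ' is quasi-isometric to Γ, then Γ' also has finite treewidth. -/
/-- A graph has finite treewidth if it admits a tree decomposition with
uniformly bounded finite bags. -/
def HasFiniteTreewidth {V : Type} (Γ : SimpleGraph V) : Prop :=
  ∃ (ι : Type) (T : SimpleGraph ι) (B : ι → Set V),
    T.IsTree ∧
    (∀ v : V, ∃ t, v ∈ B t) ∧
    (∀ u v : V, Γ.Adj u v → ∃ t, u ∈ B t ∧ v ∈ B t) ∧
    (∀ (v : V) (t₁ t₂ : ι) (p : T.Walk t₁ t₂), p.IsPath →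
        v ∈ B t₁ → v ∈ B t₂ → ∀ t ∈ p.support, v ∈ B t) ∧
    (∃ k : ℕ, ∀ t, (B t).Finite ∧ (B t).ncard ≤ k)

/-- A graph has uniformly bounded degree `d`. -/
def DegreeBoundedBy {V : Type} (Γ : SimpleGraph V) (d : ℕ) : Prop :=
  ∀ v : V, (Γ.neighborSet v).Finite ∧ (Γ.neighborSet v).ncard ≤ d



/-- Bounded union of uniformly bounded finite sets is finite with bounded card. -/
lemma biUnion_bound {A B : Type} (S : Set B) (hS : S.Finite) (g : B → Set A) (m : ℕ)
    (hg : ∀ b, (g b).Finite ∧ (g b).ncard ≤ m) :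
    (⋃ b ∈ S, g b).Finite ∧ (⋃ b ∈ S, g b).ncard ≤ S.ncard * m := by
  classical
  set F : Finset A := hS.toFinset.biUnion (fun b => (hg b).1.toFinset) with hF
  have hsub : (⋃ b ∈ S, g b) ⊆ ↑F := by
    intro a ha
    simp only [Set.mem_iUnion, exists_prop] at ha
    obtain ⟨b, hb, hab⟩ := ha
    simp only [hF, Finset.coe_biUnion, Set.mem_iUnion, Finset.mem_coe,
      Set.Finite.mem_toFinset, exists_prop]
    exact ⟨b, hb, hab⟩
  have hfin : (⋃ b ∈ S, g b).Finite := Set.Finite.subset F.finite_toSet hsub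
  refine ⟨hfin, ?_⟩
  calc (⋃ b ∈ S, g b).ncard ≤ (↑F : Set A).ncard :=
        Set.ncard_le_ncard hsub F.finite_toSet
    _ = F.card := Set.ncard_coe_finset F
    _ ≤ hS.toFinset.card * m := by
        apply Finset.card_biUnion_le_card_mul
        intro b _
        rw [← Set.ncard_eq_toFinset_card (g b) (hg b).1]
        exact (hg b).2
    _ = S.ncard * m := by rw [← Set.ncard_eq_toFinset_card S hS]

/-- Balls in connected bounded-degree graphs are finite with bounded cardinality. -/
lemma ball_bound {V : Type} (Γ : SimpleGraph V) (hconn : Γ.Connected) (d : ℕ)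
    (hdeg : DegreeBoundedBy Γ d) (w : V) (r : ℕ) :
    {u | Γ.dist u w ≤ r}.Finite ∧ {u | Γ.dist u w ≤ r}.ncard ≤ (d+1)^r := by
  classical
  induction r with
  | zero =>
    have h : {u | Γ.dist u w ≤ 0} = {w} := by
      ext u
      simp [Nat.le_zero, hconn.dist_eq_zero_iff]
    rw [h]; simp
  | succ r ih =>
    obtain ⟨hfin, hcard⟩ := ih
    have hsub : {u | Γ.dist u w ≤ r+1} ⊆
        ⋃ v ∈ {u | Γ.dist u w ≤ r}, insert v (Γ.neighborSet v) := by
      intro u hu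
      simp only [Set.mem_setOf_eq] at hu
      by_cases h0 : Γ.dist u w ≤ r
      · exact Set.mem_biUnion h0 (Set.mem_insert u _)
      · have hne : u ≠ w := by
          rintro rfl
          simp [SimpleGraph.dist_self] at h0
        obtain ⟨p, hp⟩ := (hconn u w).exists_walk_length_eq_dist
        cases p with
        | nil => exact absurd rfl hne
        | @cons _ b _ hadj q =>
          have hq : Γ.dist b w ≤ r := by
            have h1 := SimpleGraph.dist_le q
            have h2 : q.length + 1 = Γ.dist u w := by
              simpa [SimpleGraph.Walk.length_cons] using hp
            omega
          exact Set.mem_biUnion hq (Set.mem_insert_iff.mpr (Or.inr hadj.symm))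
    have hb : ∀ v : V, (insert v (Γ.neighborSet v)).Finite ∧
        (insert v (Γ.neighborSet v)).ncard ≤ d + 1 := by
      intro v
      refine ⟨(hdeg v).1.insert v, ?_⟩
      calc (insert v (Γ.neighborSet v)).ncard ≤ (Γ.neighborSet v).ncard + 1 :=
            Set.ncard_insert_le v _
        _ ≤ d + 1 := by have := (hdeg v).2; omega
    obtain ⟨hUf, hUc⟩ := biUnion_bound _ hfin _ (d+1) hb
    refine ⟨hUf.subset hsub, ?_⟩
    calc {u | Γ.dist u w ≤ r+1}.ncard ≤ _ := Set.ncard_le_ncard hsub hUf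
      _ ≤ {u | Γ.dist u w ≤ r}.ncard * (d+1) := hUc
      _ ≤ (d+1)^r * (d+1) := Nat.mul_le_mul_right _ hcard
      _ = (d+1)^(r+1) := by ring

section Tree
variable {ι : Type} {T : SimpleGraph ι}

/-- The unique path in a tree between two vertices. -/
noncomputable def thePath (hT : T.IsTree) (a b : ι) : T.Walk a b :=
  (hT.existsUnique_path a b).choose

lemma thePath_isPath (hT : T.IsTree) (a b : ι) : (thePath hT a b).IsPath :=
  (hT.existsUnique_path a b).choose_spec.1

lemma eq_thePath (hT : T.IsTree) {a b : ι} (p : T.Walk a b) (hp : p.IsPath) :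
    p = thePath hT a b :=
  (hT.existsUnique_path a b).choose_spec.2 p hp

lemma mem_support_split (hT : T.IsTree) {a b t : ι} (c : ι)
    (ht : t ∈ (thePath hT a b).support) :
    t ∈ (thePath hT a c).support ∨ t ∈ (thePath hT c b).support := by
  haveI := Classical.decEq ι
  have hq : ((thePath hT a c).append (thePath hT c b)).bypass.IsPath :=
    SimpleGraph.Walk.bypass_isPath _
  have he : ((thePath hT a c).append (thePath hT c b)).bypass = thePath hT a b :=
    eq_thePath hT _ hq
  rw [← he] at ht
  have h2 := SimpleGraph.Walk.support_bypass_subset _ ht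
  rwa [SimpleGraph.Walk.mem_support_append_iff] at h2

/-- Separation lemma: any walk between vertices of bags `t₁` and `t₂` meets
every bag on the tree path between `t₁` and `t₂`. -/
lemma sep_lemma {V : Type} {Γ : SimpleGraph V} (hT : T.IsTree) (B : ι → Set V)
    (hpath : ∀ (v : V) (t₁ t₂ : ι) (p : T.Walk t₁ t₂), p.IsPath →
        v ∈ B t₁ → v ∈ B t₂ → ∀ t ∈ p.support, v ∈ B t)
    (hedge : ∀ u v : V, Γ.Adj u v → ∃ t, u ∈ B t ∧ v ∈ B t) :
    ∀ {w1 w2 : V} (W : Γ.Walk w1 w2) (t₁ t₂ t : ι), w1 ∈ B t₁ → w2 ∈ B t₂ →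
      t ∈ (thePath hT t₁ t₂).support → ∃ w ∈ W.support, w ∈ B t := by
  intro w1 w2 W
  induction W with
  | nil =>
    intro t₁ t₂ t h1 h2 ht
    exact ⟨_, by simp, hpath _ t₁ t₂ _ (thePath_isPath hT _ _) h1 h2 t ht⟩
  | @cons a b c hadj q ih =>
    intro t₁ t₂ t h1 h2 ht
    obtain ⟨s, hus, hvs⟩ := hedge _ _ hadj
    rcases mem_support_split hT s ht with hl | hr
    · exact ⟨a, by simp, hpath a t₁ s _ (thePath_isPath hT _ _) h1 hus t hl⟩
    · obtain ⟨w, hw, hwB⟩ := ih s t₂ t hvs h2 hr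
      exact ⟨w, by simp [hw], hwB⟩

end Tree

/-- Finite treewidth is a quasi-isometry invariant among connected graphs of
uniformly bounded degree. -/
theorem finite_treewidth_quasiIsometry_invariant
    {V V' : Type} (Γ : SimpleGraph V) (Γ' : SimpleGraph V')
    (hconn : Γ.Connected) (hconn' : Γ'.Connected)
    (d : ℕ) (hdeg : DegreeBoundedBy Γ d) (hdeg' : DegreeBoundedBy Γ' d)
    (htw : HasFiniteTreewidth Γ)
    (f : V' → V) (k : ℕ) (hk : 1 ≤ k)
    (hupper : ∀ u v : V', (Γ.dist (f u) (f v) : ℝ) ≤ k * (Γ'.dist u v : ℝ) + k)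
    (hlower : ∀ u v : V', ((Γ'.dist u v : ℝ)) / k - k ≤ (Γ.dist (f u) (f v) : ℝ))
    (hdense : ∀ w : V, ∃ u : V', (Γ.dist w (f u) : ℝ) ≤ k) :
    HasFiniteTreewidth Γ' := by
  classical
  obtain ⟨ι, T, B, hT, hvert, hedge, hpath, k0, hbags⟩ := htw
  set B' : ι → Set V' := fun t => {u | ∃ w ∈ B t, Γ.dist (f u) w ≤ 2*k} with hB'
  refine ⟨ι, T, B', hT, ?_, ?_, ?_, ?_⟩
  · -- vertex cover
    intro u
    obtain ⟨t, ht⟩ := hvert (f u)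
    exact ⟨t, f u, ht, by simp [SimpleGraph.dist_self]⟩
  · -- edge cover
    intro u v huv
    have hdist : Γ.dist (f u) (f v) ≤ 2*k := by
      have h1 : Γ'.dist u v = 1 := SimpleGraph.dist_eq_one_iff_adj.mpr huv
      have h2 := hupper u v
      rw [h1] at h2
      push_cast at h2
      have h3 : (Γ.dist (f u) (f v) : ℝ) ≤ ((2*k : ℕ) : ℝ) := by push_cast; linarith
      exact_mod_cast h3
    obtain ⟨t, ht⟩ := hvert (f u)
    refine ⟨t, ⟨f u, ht, by simp [SimpleGraph.dist_self]⟩, ⟨f u, ht, ?_⟩⟩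
    rwa [SimpleGraph.dist_comm]
  · -- path condition
    intro u t₁ t₂ p hp h1 h2 t ht
    have hpeq : p = thePath hT t₁ t₂ := eq_thePath hT p hp
    rw [hpeq] at ht
    obtain ⟨w1, hw1B, hw1d⟩ := h1
    obtain ⟨w2, hw2B, hw2d⟩ := h2
    obtain ⟨W1, hW1⟩ := (hconn w1 (f u)).exists_walk_length_eq_dist
    obtain ⟨W2, hW2⟩ := (hconn (f u) w2).exists_walk_length_eq_dist
    obtain ⟨w, hwsup, hwB⟩ :=
      sep_lemma hT B hpath hedge (W1.append W2) t₁ t₂ t hw1B hw2B ht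
    refine ⟨w, hwB, ?_⟩
    rw [SimpleGraph.Walk.mem_support_append_iff] at hwsup
    rcases hwsup with h | h
    · have hs := SimpleGraph.Walk.take_spec W1 h
      have hlen : (W1.takeUntil w h).length + (W1.dropUntil w h).length = W1.length := by
        rw [← SimpleGraph.Walk.length_append, hs]
      have hd : Γ.dist w (f u) ≤ (W1.dropUntil w h).length := SimpleGraph.dist_le _
      have h2k : Γ.dist w1 (f u) ≤ 2*k := by rwa [SimpleGraph.dist_comm] at hw1d
      rw [SimpleGraph.dist_comm]
      omega
    · have hd : Γ.dist (f u) w ≤ (W2.takeUntil w h).length := SimpleGraph.dist_le _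
      have hlen := SimpleGraph.Walk.length_takeUntil_le W2 h
      omega
  · -- bag finiteness and bound
    have hfib : ∀ x : V, {u : V' | f u = x}.Finite ∧
        {u : V' | f u = x}.ncard ≤ (d+1)^(k*k) := by
      intro x
      rcases Set.eq_empty_or_nonempty {u : V' | f u = x} with he | ⟨u₀, hu₀⟩
      · rw [he]; simp
      · have hu₀' : f u₀ = x := hu₀
        have hsub : {u : V' | f u = x} ⊆ {u | Γ'.dist u u₀ ≤ k*k} := by
          intro u hu
          have hu' : f u = x := hu
          have hl := hlower u u₀
          rw [hu', hu₀', SimpleGraph.dist_self] at hl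
          have hk0 : (0:ℝ) < k := by exact_mod_cast hk
          have h4 : (Γ'.dist u u₀ : ℝ) ≤ ((k*k : ℕ) : ℝ) := by
            push_cast
            rw [Nat.cast_zero] at hl
            nlinarith [(div_le_iff₀ hk0).mp (by linarith : ((Γ'.dist u u₀ : ℝ))/k ≤ k)]
          exact_mod_cast h4
        obtain ⟨hbf, hbc⟩ := ball_bound Γ' hconn' d hdeg' u₀ (k*k)
        exact ⟨hbf.subset hsub, le_trans (Set.ncard_le_ncard hsub hbf) hbc⟩
    have hP : ∀ w : V, {u : V' | Γ.dist (f u) w ≤ 2*k}.Finite ∧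
        {u : V' | Γ.dist (f u) w ≤ 2*k}.ncard ≤ (d+1)^(2*k) * (d+1)^(k*k) := by
      intro w
      have heq : {u : V' | Γ.dist (f u) w ≤ 2*k} =
          ⋃ x ∈ {x | Γ.dist x w ≤ 2*k}, {u : V' | f u = x} := by
        ext u
        simp only [Set.mem_setOf_eq, Set.mem_iUnion, exists_prop]
        constructor
        · intro h; exact ⟨f u, h, rfl⟩
        · rintro ⟨x, hx, rfl⟩; exact hx
      obtain ⟨hSf, hSc⟩ := ball_bound Γ hconn d hdeg w (2*k)
      obtain ⟨hu1, hu2⟩ := biUnion_bound _ hSf _ ((d+1)^(k*k)) hfib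
      rw [heq]
      exact ⟨hu1, le_trans hu2 (Nat.mul_le_mul_right _ hSc)⟩
    refine ⟨k0 * ((d+1)^(2*k) * (d+1)^(k*k)), ?_⟩
    intro t
    have heq2 : B' t = ⋃ w ∈ B t, {u : V' | Γ.dist (f u) w ≤ 2*k} := by
      ext u
      simp only [hB', Set.mem_setOf_eq, Set.mem_iUnion, exists_prop]
    obtain ⟨h1, h2⟩ := biUnion_bound (B t) (hbags t).1 _ _ hP
    rw [heq2]
    exact ⟨h1, le_trans h2 (Nat.mul_le_mul_right _ (hbags t).2)⟩
end
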